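/- arXiv:2011.10261 — 11 statements merged into one kernel-verified Lean document; each statement's English description precedes it below -/
import Mathlib

section
/- If (κ,λ) is a pinning down pair for a topological space X, |X| ≤ κ, and κ equals the cofinality of the partial order ([κ]^λ, ⊆), then X has a dense subset of cardinality at most λ. -/
open Cardinal Topology Set

universe u

def PinningDownPair (X : Type u) [TopologicalSpace X] (k lam : Cardinal.{u}) : Prop :=
  ∀ 𝒰 : Set (Set X), (∀ U ∈ 𝒰, IsOpen U ∧ U.Nonempty) → #𝒰 ≤ k →
    ∃ B : Set X, #B ≤ lam ∧ ∀ U ∈ 𝒰, (B ∩ U).Nonempty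

/-- The cofinality of the partial order ([κ]^λ, ⊆) of λ-sized subsets of (a set of size) κ:
the least cardinality of a family of λ-sized subsets that is cofinal under inclusion. -/
noncomputable def cofSubsets (k lam : Cardinal.{u}) : Cardinal.{u} :=
  sInf {c | ∃ 𝒜 : Set (Set k.out), #𝒜 = c ∧ (∀ A ∈ 𝒜, #A = lam) ∧
    ∀ S : Set k.out, #S = lam → ∃ A ∈ 𝒜, S ⊆ A}

def IsCofinalSmallSets {α : Type u} (lam : Cardinal.{u}) (𝒞 : Set (Set α)) : Prop :=
  (∀ C ∈ 𝒞, #C ≤ lam) ∧ ∀ B : Set α, #B ≤ lam → ∃ C ∈ 𝒞, B ⊆ C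

theorem Cardinal.exists_superset_mk_eq {α : Type u} {s : Set α} {c : Cardinal.{u}}
    (hc : ℵ₀ ≤ c) (hs : #s ≤ c) (hcα : c ≤ #α) : ∃ t, s ⊆ t ∧ #t = c := by
  obtain ⟨r, hr⟩ := le_mk_iff_exists_set.mp hcα
  refine ⟨s ∪ r, subset_union_left, le_antisymm ?_ ?_⟩
  · calc #(s ∪ r : Set α) ≤ #s + #r := mk_union_le s r
      _ ≤ c + c := add_le_add hs hr.le
      _ = c := add_eq_self hc
  · exact hr ▸ mk_le_mk_of_subset subset_union_right

theorem exists_cofinal_mk_eq_cofSubsets (k lam : Cardinal.{u}) :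
    ∃ 𝒜 : Set (Set k.out), #𝒜 = cofSubsets k lam ∧ (∀ A ∈ 𝒜, #A = lam) ∧
      ∀ S : Set k.out, #S = lam → ∃ A ∈ 𝒜, S ⊆ A :=
  csInf_mem (s := {c | ∃ 𝒜 : Set (Set k.out), #𝒜 = c ∧ (∀ A ∈ 𝒜, #A = lam) ∧
    ∀ S : Set k.out, #S = lam → ∃ A ∈ 𝒜, S ⊆ A})
    ⟨_, {A | #A = lam}, rfl, fun _ hA => hA, fun S hS => ⟨S, hS, subset_rfl⟩⟩

/-- A cofinal family in `[κ]^λ` pulls back along an injection of `X` into `κ`. -/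
theorem exists_isCofinalSmallSets_of_mk_le {X : Type u} {k lam : Cardinal.{u}}
    (hlam : ℵ₀ ≤ lam) (hlk : lam ≤ k) (hX : #X ≤ k) :
    ∃ 𝒞 : Set (Set X), #𝒞 ≤ cofSubsets k lam ∧ IsCofinalSmallSets lam 𝒞 := by
  obtain ⟨f⟩ : Nonempty (X ↪ k.out) := by rwa [← le_def, mk_out]
  obtain ⟨𝒜, h𝒜, h𝒜lam, h𝒜cof⟩ := exists_cofinal_mk_eq_cofSubsets k lam
  refine ⟨preimage f '' 𝒜, h𝒜 ▸ mk_image_le, ?_, ?_⟩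
  · rintro _ ⟨A, hA, rfl⟩
    exact (mk_preimage_of_injective f A f.injective).trans (h𝒜lam A hA).le
  · intro B hB
    obtain ⟨S, hBS, hS⟩ := Cardinal.exists_superset_mk_eq (s := f '' B) hlam
      (mk_image_le.trans hB) (by rwa [mk_out])
    obtain ⟨A, hA, hSA⟩ := h𝒜cof S hS
    exact ⟨f ⁻¹' A, mem_image_of_mem _ hA, image_subset_iff.mp (hBS.trans hSA)⟩

/-- Pin down the nonempty sets `(closure C)ᶜ`, `C ∈ 𝒞`, by some `B`; the member `C ⊇ B` of `𝒞`
is then dense, since `B` cannot meet `(closure C)ᶜ`. -/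
theorem PinningDownPair.exists_dense_mk_le {X : Type u} [TopologicalSpace X]
    {k lam : Cardinal.{u}} (hpd : PinningDownPair X k lam) {𝒞 : Set (Set X)}
    (h𝒞k : #𝒞 ≤ k) (h𝒞 : IsCofinalSmallSets lam 𝒞) : ∃ D : Set X, Dense D ∧ #D ≤ lam := by
  let 𝒰 := (fun C => (closure C)ᶜ) '' 𝒞 ∩ {U | U.Nonempty}
  have h𝒰 : ∀ U ∈ 𝒰, IsOpen U ∧ U.Nonempty := by
    rintro _ ⟨⟨C, -, rfl⟩, hne⟩
    exact ⟨isClosed_closure.isOpen_compl, hne⟩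
  obtain ⟨B, hB, hB𝒰⟩ := hpd 𝒰 h𝒰 ((mk_le_mk_of_subset inter_subset_left).trans
    (mk_image_le.trans h𝒞k))
  obtain ⟨C, hC, hBC⟩ := h𝒞.2 B hB
  refine ⟨C, ?_, h𝒞.1 C hC⟩
  rw [dense_iff_closure_eq, ← compl_empty_iff, ← not_nonempty_iff_eq_empty]
  intro hne
  obtain ⟨x, hxB, hxC⟩ := hB𝒰 _ ⟨⟨C, hC, rfl⟩, hne⟩
  exact hxC (subset_closure (hBC hxB))

theorem stmt_0 {X : Type u} [TopologicalSpace X] (k lam : Cardinal.{u})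
    (hlam : ℵ₀ ≤ lam) (hkl : lam < k)
    (hpd : PinningDownPair X k lam) (hX : #X ≤ k)
    (hcof : k = cofSubsets k lam) :
    ∃ D : Set X, Dense D ∧ #D ≤ lam := by
  obtain ⟨𝒞, h𝒞k, h𝒞⟩ := exists_isCofinalSmallSets_of_mk_le hlam hkl.le hX
  exact hpd.exists_dense_mk_le (hcof ▸ h𝒞k) h𝒞
end

section
/- If X is a topological space with |X| < ℵ_ω and (|X|, λ) is a pinning down pair for X, then d(X) ≤ λ. -/
open Cardinal Topology Set

universe u

/-!
Let `F` be a family of at most `#X` sets of size `≤ lam` such that every subset of `X` of size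
`≤ lam` is contained in a member of `F`. If no set of size `≤ lam` were dense, we could choose for
each `A ∈ F` a nonempty open set `U A` disjoint from `A`; a set `B` of at most `lam` points meeting
every `U A` lies inside some `C ∈ F`, which contradicts `B ∩ U C ≠ ∅`.

Such an `F` exists because `cof([ℵ_n]^{≤ lam}, ⊆) = ℵ_n` when `lam < ℵ_n`. This is proved by
induction on `n`: a set of size `ℵ_(n+1)` is the increasing union of `ℵ_(n+1)` initial segments,
each of size at most `ℵ_n`, and by regularity of `ℵ_(n+1)` each subset of size `≤ lam` lies
inside one of them.
-/

theorem Cardinal.IsRegular.exists_forall_lt_of_mk_lt {κ : Cardinal.{u}} (hκ : κ.IsRegular)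
    {s : Set κ.ord.ToType} (hs : #s < κ) : ∃ x, ∀ y ∈ s, y < x :=
  not_isCofinal_iff.1 fun h ↦
    (Order.cof_le h).not_gt (by rwa [Ordinal.cof_toType, hκ.cof_ord])

theorem Cardinal.exists_nat_lt_aleph_of_lt_aleph_omega0 {c : Cardinal.{u}}
    (hc : c < ℵ_ Ordinal.omega0) : ∃ n : ℕ, c < ℵ_ n := by
  rw [aleph_limit Ordinal.isSuccLimit_omega0, lt_ciSup_iff' bddAbove_of_small] at hc
  obtain ⟨⟨a, ha⟩, hca⟩ := hc
  obtain ⟨n, rfl⟩ := Ordinal.lt_omega0.1 ha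
  exact ⟨n, hca⟩

section CofinalFamilies

variable {X : Type u}

/-- `F ⊆ [X]^{≤ lam}` is cofinal in `([S]^{≤ lam}, ⊆)`. -/
def IsCofinalSmallFamily (lam : Cardinal.{u}) (S : Set X) (F : Set (Set X)) : Prop :=
  (∀ B ∈ F, #B ≤ lam) ∧ ∀ A ⊆ S, #A ≤ lam → ∃ B ∈ F, A ⊆ B

theorem exists_isCofinalSmallFamily_of_mk_le {lam : Cardinal.{u}} (hlam : ℵ₀ ≤ lam)
    {S : Set X} (hS : #S ≤ lam) :
    ∃ F : Set (Set X), #F ≤ max lam #S ∧ IsCofinalSmallFamily lam S F :=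
  ⟨{S}, by simpa using le_max_of_le_left (one_le_aleph0.trans hlam), by simpa using hS,
    fun A hA _ ↦ ⟨S, rfl, hA⟩⟩

theorem exists_isCofinalSmallFamily_of_isRegular {κ lam μ : Cardinal.{u}} (hκ : κ.IsRegular)
    (hlam : lam < κ) {S : Set X} (hS : #S ≤ κ)
    (hsmall : ∀ T : Set X, #T < κ →
      ∃ F : Set (Set X), #F ≤ μ ∧ IsCofinalSmallFamily lam T F) :
    ∃ F : Set (Set X), #F ≤ κ * μ ∧ IsCofinalSmallFamily lam S F := by
  obtain ⟨e⟩ : Nonempty (S ↪ κ.ord.ToType) := by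
    rw [← Cardinal.le_def, mk_toType, card_ord]; exact hS
  let T : κ.ord.ToType → Set X := fun x ↦ Subtype.val '' {s | e s < x}
  have hT : ∀ x, #(T x) < κ := fun x ↦ calc
    #(T x) ≤ #(Iio x) := mk_image_le.trans (mk_preimage_of_injective _ _ e.injective)
    _ < κ := by simpa using mk_Iio_lt x (by simp)
  choose F hFμ hF using fun x ↦ hsmall (T x) (hT x)
  refine ⟨⋃ x, F x, ?_, fun B hB ↦ ?_, fun A hAS hA ↦ ?_⟩
  · calc #(⋃ x, F x) ≤ #κ.ord.ToType * ⨆ x, #(F x) := mk_iUnion_le _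
      _ ≤ κ * μ := by rw [mk_toType, card_ord]; exact mul_le_mul_right (ciSup_le' hFμ) _
  · obtain ⟨x, hx⟩ := mem_iUnion.1 hB
    exact (hF x).1 B hx
  · obtain ⟨x, hx⟩ := hκ.exists_forall_lt_of_mk_lt (s := range fun a : A ↦ e ⟨a, hAS a.2⟩)
      (mk_range_le.trans_lt (hA.trans_lt hlam))
    obtain ⟨B, hB, hAB⟩ := (hF x).2 A (fun a ha ↦ ⟨⟨a, hAS ha⟩, hx _ ⟨⟨a, ha⟩, rfl⟩, rfl⟩) hA
    exact ⟨B, mem_iUnion.2 ⟨x, hB⟩, hAB⟩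

theorem exists_isCofinalSmallFamily_of_mk_le_aleph {lam : Cardinal.{u}} (hlam : ℵ₀ ≤ lam)
    (n : ℕ) {S : Set X} (hS : #S ≤ ℵ_ n) :
    ∃ F : Set (Set X), #F ≤ max lam #S ∧ IsCofinalSmallFamily lam S F := by
  induction n generalizing S with
  | zero => exact exists_isCofinalSmallFamily_of_mk_le hlam (hS.trans (by simpa using hlam))
  | succ n ih =>
    rcases le_or_gt #S (ℵ_ n) with hSn | hSn
    · exact ih hSn
    rcases le_or_gt #S lam with hSlam | hSlam
    · exact exists_isCofinalSmallFamily_of_mk_le hlam hSlam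
    have hsucc : ℵ_ (n + 1 : ℕ) = Order.succ (ℵ_ n) := by push_cast; exact (succ_aleph _).symm
    have hSeq : #S = ℵ_ (n + 1 : ℕ) := hS.antisymm (hsucc ▸ Order.succ_le_of_lt hSn)
    obtain ⟨F, hF, hcov⟩ := exists_isCofinalSmallFamily_of_isRegular (μ := max lam (ℵ_ n))
      (hsucc ▸ isRegular_succ (aleph0_le_aleph _)) (hSeq ▸ hSlam) hSeq.le fun T hT ↦ by
        have hTn : #T ≤ ℵ_ n := Order.lt_succ_iff.1 (hsucc ▸ hT)
        obtain ⟨F, hF, hcov⟩ := ih hTn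
        exact ⟨F, hF.trans (max_le_max le_rfl hTn), hcov⟩
    refine ⟨F, hF.trans ?_, hcov⟩
    calc ℵ_ (n + 1 : ℕ) * max lam (ℵ_ n) ≤ #S * #S := by
          rw [← hSeq]; exact mul_le_mul_right (max_le hSlam.le hSn.le) _
      _ = #S := mul_eq_self (hlam.trans hSlam.le)
      _ ≤ max lam #S := le_max_right _ _

theorem exists_isCofinalSmallFamily_of_mk_lt_aleph_omega0 {lam : Cardinal.{u}}
    (hlam : ℵ₀ ≤ lam) {S : Set X} (hS : #S < ℵ_ Ordinal.omega0) :
    ∃ F : Set (Set X), #F ≤ max lam #S ∧ IsCofinalSmallFamily lam S F :=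
  let ⟨n, hn⟩ := exists_nat_lt_aleph_of_lt_aleph_omega0 hS
  exists_isCofinalSmallFamily_of_mk_le_aleph hlam n hn.le

end CofinalFamilies

theorem PinningDownPair.exists_dense_of_isCofinalSmallFamily {X : Type u} [TopologicalSpace X]
    {k lam : Cardinal.{u}} (hpd : PinningDownPair X k lam) {F : Set (Set X)} (hF : #F ≤ k)
    (hcov : IsCofinalSmallFamily lam univ F) : ∃ D : Set X, Dense D ∧ #D ≤ lam := by
  by_contra! hnoDense
  have hU : ∀ A ∈ F, ∃ U, IsOpen U ∧ U.Nonempty ∧ ¬(U ∩ A).Nonempty := fun A hA ↦ by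
    simpa [dense_iff_inter_open] using fun hA' ↦ (hnoDense A hA').not_ge (hcov.1 A hA)
  choose! U hUo hUne hUA using hU
  obtain ⟨B, hB, hBU⟩ := hpd (U '' F) (forall_mem_image.2 fun A hA ↦ ⟨hUo A hA, hUne A hA⟩)
    (mk_image_le.trans hF)
  obtain ⟨C, hC, hBC⟩ := hcov.2 B (subset_univ B) hB
  obtain ⟨x, hxB, hxU⟩ := hBU (U C) (mem_image_of_mem U hC)
  exact hUA C hC ⟨x, hxU, hBC hxB⟩

theorem stmt_2 {X : Type u} [TopologicalSpace X] (lam : Cardinal.{u})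
    (hlam : ℵ₀ ≤ lam) (hkl : lam < #X)
    (hX : #X < Cardinal.aleph Ordinal.omega0)
    (hpd : PinningDownPair X (#X) lam) :
    ∃ D : Set X, Dense D ∧ #D ≤ lam := by
  obtain ⟨F, hF, hcov⟩ :=
    exists_isCofinalSmallFamily_of_mk_lt_aleph_omega0 hlam (S := univ) (by rwa [mk_univ])
  rw [mk_univ, max_eq_right hkl.le] at hF
  exact hpd.exists_dense_of_isCofinalSmallFamily hF hcov
end

section
/- If ((2^λ)⁺, λ) is a pinning down pair for a topological space X, then |RO(X)| ≤ 2^λ, where RO(X) is the family of regular open subsets of X. -/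
/-! A family `F` of regular open sets is determined by its traces on any set `B` meeting every
nonempty difference `U \ closure V` with `U, V ∈ F`: if `B ∩ U ⊆ V` then `U \ closure V` misses
`B`, so it is empty, and `U ⊆ closure V` forces `U ⊆ interior (closure V) = V`. There are at most
`#F * #F` such differences, so a pinning down pair `(κ, λ)` with `κ` infinite bounds every such
`F` of size at most `κ` by `2 ^ λ`. Applied with `κ = (2 ^ λ)⁺`, a family of regular open sets of
size exactly `(2 ^ λ)⁺` is impossible. -/

open Cardinal Topology Set

universe u

theorem Cardinal.mk_le_of_forall_subset_mk_le_succ {α : Type u} {t : Set α} {κ : Cardinal.{u}}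
    (h : ∀ s ⊆ t, #s ≤ Order.succ κ → #s ≤ κ) : #t ≤ κ := by
  by_contra! hlt
  obtain ⟨s, hst, hs⟩ := le_mk_iff_exists_subset.mp (Order.succ_le_of_lt hlt)
  exact (Order.lt_succ κ).not_ge (hs ▸ h s hst hs.le)

section RegularOpen

variable {X : Type u} [TopologicalSpace X]

theorem subset_of_subset_closure_of_eq_interior_closure {U V : Set X} (hU : IsOpen U)
    (hV : V = interior (closure V)) (h : U ⊆ closure V) : U ⊆ V :=
  hV.symm ▸ interior_maximal h hU

theorem subset_of_inter_subset_of_meets_diff_closure {U V B : Set X}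
    (hU : U = interior (closure U)) (hV : V = interior (closure V))
    (hB : (U \ closure V).Nonempty → (B ∩ (U \ closure V)).Nonempty) (h : B ∩ U ⊆ V) :
    U ⊆ V := by
  refine subset_of_subset_closure_of_eq_interior_closure (hU ▸ isOpen_interior) hV ?_
  by_contra hUV
  obtain ⟨b, hbB, hbU, hbV⟩ := hB (sdiff_nonempty.mpr hUV)
  exact hbV (subset_closure (h ⟨hbB, hbU⟩))

theorem mk_le_two_pow_of_meets_diff_closure {F : Set (Set X)} {B : Set X}
    (hF : ∀ U ∈ F, U = interior (closure U))
    (hB : ∀ U ∈ F, ∀ V ∈ F, (U \ closure V).Nonempty → (B ∩ (U \ closure V)).Nonempty) :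
    #F ≤ 2 ^ #B := by
  have trace_injective : Function.Injective fun U : F => ((↑) : B → X) ⁻¹' U := by
    rintro ⟨U, hUF⟩ ⟨V, hVF⟩ hUV
    have htrace : B ∩ U = B ∩ V := Subtype.preimage_coe_eq_preimage_coe_iff.mp hUV
    refine Subtype.ext (Subset.antisymm ?_ ?_)
    · exact subset_of_inter_subset_of_meets_diff_closure (hF U hUF) (hF V hVF) (hB U hUF V hVF)
        (htrace ▸ inter_subset_right)
    · exact subset_of_inter_subset_of_meets_diff_closure (hF V hVF) (hF U hUF) (hB V hVF U hUF)
        (htrace ▸ inter_subset_right)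
  exact (mk_le_of_injective trace_injective).trans_eq mk_set

theorem PinningDownPair.mk_le_two_pow_of_eq_interior_closure {k lam : Cardinal.{u}}
    (hpd : PinningDownPair X k lam) (hk : ℵ₀ ≤ k) {F : Set (Set X)}
    (hF : ∀ U ∈ F, U = interior (closure U)) (hFk : #F ≤ k) : #F ≤ 2 ^ lam := by
  let 𝒰 : Set (Set X) := image2 (fun U V => U \ closure V) F F ∩ {W | W.Nonempty}
  have h𝒰 : ∀ W ∈ 𝒰, IsOpen W ∧ W.Nonempty := by
    rintro _ ⟨⟨U, hU, V, -, rfl⟩, hne⟩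
    exact ⟨(hF U hU ▸ isOpen_interior).sdiff isClosed_closure, hne⟩
  have h𝒰k : #𝒰 ≤ k :=
    calc #𝒰 ≤ #(image2 (fun U V => U \ closure V) F F) := mk_le_mk_of_subset inter_subset_left
      _ ≤ #F * #F := mk_image2_le
      _ ≤ k * k := mul_le_mul' hFk hFk
      _ = k := mul_eq_self hk
  obtain ⟨B, hBlam, hB⟩ := hpd 𝒰 h𝒰 h𝒰k
  calc #F ≤ 2 ^ #B := mk_le_two_pow_of_meets_diff_closure hF
        fun U hU V hV hne => hB _ ⟨mem_image2_of_mem hU hV, hne⟩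
    _ ≤ 2 ^ lam := power_le_power_left two_ne_zero hBlam

end RegularOpen

theorem stmt_6 {X : Type u} [TopologicalSpace X] (lam : Cardinal.{u}) (hlam : ℵ₀ ≤ lam)
    (hpd : PinningDownPair X (Order.succ (2 ^ lam)) lam) :
    #{U : Set X | U = interior (closure U)} ≤ 2 ^ lam := by
  have hk : ℵ₀ ≤ Order.succ ((2 : Cardinal.{u}) ^ lam) :=
    hlam.trans ((cantor lam).le.trans (Order.le_succ _))
  exact mk_le_of_forall_subset_mk_le_succ fun F hF hFk =>
    hpd.mk_le_two_pow_of_eq_interior_closure hk hF hFk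
end

section
/- If ((2^λ)⁺, λ) is a pinning down pair for a topological space X and the nonempty regular open sets form a π-base for X, then d(X) ≤ λ. -/
/-!
Distinct regular open sets `U ≠ V` are separated by one of the nonempty open sets `U \ closure V`,
`V \ closure U`. If a family of at most `κ` regular open sets is given, the at most `κ` sets of this
form are pinned down by a set `B` of size `λ`, and `U ↦ B ∩ U` is then injective on the family, so
it has at most `2 ^ λ` members. Hence there are at most `2 ^ λ < (2 ^ λ)⁺` nonempty regular open
sets, and a set of size `λ` pinning them all down is dense because they form a π-base.
-/

open Cardinal Topology Set

universe u

theorem mk_le_two_power_of_injOn_inter {α : Type*} {S : Set (Set α)} {B : Set α}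
    (h : InjOn (B ∩ ·) S) : #S ≤ 2 ^ #B := by
  rw [← mk_image_eq_of_injOn _ _ h, ← mk_powerset]
  exact mk_le_mk_of_subset (image_subset_iff.mpr fun U _ => inter_subset_left)

section

variable {X : Type u} [TopologicalSpace X]

def IsRegularOpen (U : Set X) : Prop :=
  interior (closure U) = U

theorem IsRegularOpen.isOpen {U : Set X} (hU : IsRegularOpen U) : IsOpen U :=
  hU ▸ isOpen_interior

theorem IsRegularOpen.subset_of_subset_closure {U V : Set X} (hV : IsRegularOpen V)
    (hU : IsOpen U) (h : U ⊆ closure V) : U ⊆ V :=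
  hV ▸ interior_maximal h hU

theorem injOn_inter_of_inter_diff_closure_nonempty {S : Set (Set X)} {B : Set X}
    (hS : ∀ U ∈ S, IsRegularOpen U)
    (hB : ∀ U ∈ S, ∀ V ∈ S, (U \ closure V).Nonempty → (B ∩ (U \ closure V)).Nonempty) :
    InjOn (B ∩ ·) S := by
  have subset : ∀ U ∈ S, ∀ V ∈ S, B ∩ U = B ∩ V → U ⊆ V := by
    intro U hU V hV hUV
    refine (hS V hV).subset_of_subset_closure (hS U hU).isOpen (sdiff_eq_empty.mp ?_)
    by_contra hne
    obtain ⟨b, hbB, hbU, hbV⟩ := hB U hU V hV (nonempty_iff_ne_empty.mpr hne)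
    have hb : b ∈ B ∩ V := hUV ▸ ⟨hbB, hbU⟩
    exact hbV (subset_closure hb.2)
  exact fun U hU V hV hUV => (subset U hU V hV hUV).antisymm (subset V hV U hU hUV.symm)

namespace PinningDownPair

variable {κ lam : Cardinal.{u}}

theorem mk_le_two_power_of_isRegularOpen (hpd : PinningDownPair X κ lam) (hκ : ℵ₀ ≤ κ)
    {S : Set (Set X)} (hS : ∀ U ∈ S, IsRegularOpen U) (hSκ : #S ≤ κ) : #S ≤ 2 ^ lam := by
  set 𝒱 : Set (Set X) := {W ∈ image2 (fun U V => U \ closure V) S S | W.Nonempty}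
  have h𝒱 : ∀ W ∈ 𝒱, IsOpen W ∧ W.Nonempty := by
    rintro _ ⟨⟨U, hU, V, -, rfl⟩, hne⟩
    exact ⟨(hS U hU).isOpen.sdiff isClosed_closure, hne⟩
  have h𝒱κ : #𝒱 ≤ κ :=
    calc #𝒱 ≤ #S * #S := (mk_le_mk_of_subset (sep_subset _ _)).trans mk_image2_le
      _ ≤ κ * κ := mul_le_mul' hSκ hSκ
      _ = κ := mul_eq_self hκ
  obtain ⟨B, hBlam, hB⟩ := hpd 𝒱 h𝒱 h𝒱κ
  have hinj : InjOn (B ∩ ·) S := injOn_inter_of_inter_diff_closure_nonempty hS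
    fun U hU V hV hne => hB _ ⟨mem_image2_of_mem hU hV, hne⟩
  exact (mk_le_two_power_of_injOn_inter hinj).trans (power_le_power_left two_ne_zero hBlam)

theorem mk_setOf_isRegularOpen_le (hpd : PinningDownPair X κ lam) (hκ : ℵ₀ ≤ κ)
    (hlamκ : 2 ^ lam < κ) : #{U : Set X | IsRegularOpen U} ≤ 2 ^ lam := by
  by_contra! hlt
  obtain ⟨S, hS, hScard⟩ := le_mk_iff_exists_subset.mp (Order.succ_le_of_lt hlt)
  have hSκ : #S ≤ κ := hScard ▸ Order.succ_le_of_lt hlamκ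
  have hSle : Order.succ ((2 : Cardinal) ^ lam) ≤ 2 ^ lam :=
    hScard ▸ hpd.mk_le_two_power_of_isRegularOpen hκ hS hSκ
  exact (Order.lt_succ _).not_ge hSle

theorem exists_dense_of_isPiBase (hpd : PinningDownPair X κ lam) {P : Set (Set X)}
    (hP : ∀ U ∈ P, IsOpen U ∧ U.Nonempty)
    (hπ : ∀ W : Set X, IsOpen W → W.Nonempty → ∃ U ∈ P, U ⊆ W) (hPκ : #P ≤ κ) :
    ∃ D : Set X, Dense D ∧ #D ≤ lam := by
  obtain ⟨B, hBlam, hB⟩ := hpd P hP hPκ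
  refine ⟨B, dense_iff_inter_open.mpr fun W hW hWne => ?_, hBlam⟩
  obtain ⟨U, hU, hUW⟩ := hπ W hW hWne
  obtain ⟨x, hxB, hxU⟩ := hB U hU
  exact ⟨x, hUW hxU, hxB⟩

end PinningDownPair

end

theorem stmt_7 {X : Type u} [TopologicalSpace X] (lam : Cardinal.{u}) (hlam : ℵ₀ ≤ lam)
    (hpd : PinningDownPair X (Order.succ (2 ^ lam)) lam)
    (hpib : ∀ W : Set X, IsOpen W → W.Nonempty →
      ∃ U : Set X, U = interior (closure U) ∧ U.Nonempty ∧ U ⊆ W) :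
    ∃ D : Set X, Dense D ∧ #D ≤ lam := by
  have hκ : ℵ₀ ≤ Order.succ (2 ^ lam) := hlam.trans ((cantor lam).le.trans (Order.le_succ _))
  have hRO := hpd.mk_setOf_isRegularOpen_le hκ (Order.lt_succ _)
  refine hpd.exists_dense_of_isPiBase (P := {U | IsRegularOpen U ∧ U.Nonempty}) ?_ ?_ ?_
  · exact fun U hU => ⟨hU.1.isOpen, hU.2⟩
  · intro W hW hWne
    obtain ⟨U, hUreg, hUne, hUW⟩ := hpib W hW hWne
    exact ⟨U, ⟨hUreg.symm, hUne⟩, hUW⟩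
  · calc #{U : Set X | IsRegularOpen U ∧ U.Nonempty}
        ≤ #{U : Set X | IsRegularOpen U} := mk_le_mk_of_subset fun U hU => hU.1
      _ ≤ Order.succ (2 ^ lam) := hRO.trans (Order.le_succ _)
end

section
/- In a Hausdorff space X, every point is the intersection of the closures of its regular open neighborhoods; consequently |X| ≤ 2^{|RO(X)|}. -/
/-!
Hausdorff separation gives disjoint open sets `V ∋ x` and `W ∋ y`. The regularization
`interior (closure V)` is a regular open neighbourhood of `x`, and its closure lies in
`closure V`, which misses `W ∋ y`. So the closures of the regular open neighbourhoods of `x`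
exclude every other point, and `x ↦ {U ∈ RO(X) | x ∈ U}` embeds `X` into the power set of `RO(X)`.
-/

open Cardinal Topology Set

universe u

section

variable {X : Type u} [TopologicalSpace X] [T2Space X]

theorem exists_regularOpen_mem_notMem_closure {x y : X} (hxy : x ≠ y) :
    ∃ U : Set X, U = interior (closure U) ∧ x ∈ U ∧ y ∉ closure U := by
  obtain ⟨V, W, hV, hW, hxV, hyW, hVW⟩ := t2_separation hxy
  refine ⟨interior (closure V), interior_closure_idem.symm, hV.subset_interior_closure hxV,
    fun hy => ?_⟩
  exact (hVW.closure_left hW).notMem_of_mem_left (isClosed_closure.closure_interior_subset hy) hyW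

theorem iInter_closure_regularOpen_nhds_eq_singleton (x : X) :
    (⋂ U ∈ {U : Set X | U = interior (closure U) ∧ x ∈ U}, closure U) = {x} := by
  refine subset_antisymm (fun y hy => ?_)
    (singleton_subset_iff.2 <| mem_iInter₂.2 fun U hU => subset_closure hU.2)
  by_contra hyx
  obtain ⟨U, hU, hxU, hyU⟩ := exists_regularOpen_mem_notMem_closure (Ne.symm hyx)
  exact hyU (mem_iInter₂.1 hy U ⟨hU, hxU⟩)

theorem mk_le_two_pow_mk_regularOpen :
    #X ≤ 2 ^ #{U : Set X | U = interior (closure U)} := by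
  rw [← mk_set]
  refine mk_le_of_injective (f := fun x => {U | x ∈ U.1}) fun x y hxy => ?_
  by_contra hxy'
  obtain ⟨U, hU, hxU, hyU⟩ := exists_regularOpen_mem_notMem_closure hxy'
  have hyU' : y ∈ U := (Set.ext_iff.1 hxy ⟨U, hU⟩).1 hxU
  exact hyU (subset_closure hyU')

end

theorem stmt_9 {X : Type u} [TopologicalSpace X] [T2Space X] :
    (∀ x : X, (⋂ U ∈ {U : Set X | U = interior (closure U) ∧ x ∈ U}, closure U) = {x}) ∧
    #X ≤ 2 ^ #{U : Set X | U = interior (closure U)} :=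
  ⟨iInter_closure_regularOpen_nhds_eq_singleton, mk_le_two_pow_mk_regularOpen⟩
end

section
/- If 2^{2^λ} > (2^λ)⁺, then there exists a Urysohn space X such that ((2^λ)⁺, λ) is a dominating pair for X but d(X) > λ. -/
/-!
Let `θ = (2^λ)⁺⁺`, which is regular. In the Cantor cube `G = {0,1}^(2^λ)` the functions
depending on finitely many coordinates form a dense subgroup `H` of size `λ`. Since
`|G| = 2^(2^λ) ≥ θ`, there are `θ` distinct cosets `g i + H`, `i < θ`, each of them dense.
Stack them as layers and refine the subspace topology of their union by declaring every final
segment of layers open. This is finer than the topology induced by the injection into the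
Urysohn space `G`, so it is Urysohn. A set of size `≤ (2^λ)⁺ < θ` lies below some layer `i`, and
each point below layer `i` is in the closure of that layer: its neighbourhoods are traces of
cube-open sets on final segments containing layer `i`, which is dense in the cube. A dense set
meets every final segment, so it is unbounded in `θ` and has size at least `cf θ = θ > λ`.
-/

open Cardinal Topology Set

universe u

def DominatingPair (X : Type u) [TopologicalSpace X] (k lam : Cardinal.{u}) : Prop :=
  ∀ A : Set X, #A ≤ k → ∃ B : Set X, #B ≤ lam ∧ A ⊆ closure B

universe v w

open Function Filter

section FinitelyDependent

variable {ι B : Type*}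

theorem Finset.exists_injOn_restrict (I : Finset (ι → B)) :
    ∃ s : Finset ι, InjOn s.restrict (I : Set (ι → B)) := by
  classical
  have hsep (p q : ι → B) : ∃ t : Finset ι, (∀ i ∈ t, p i = q i) → p = q := by
    by_cases hpq : p = q
    · exact ⟨∅, fun _ => hpq⟩
    · obtain ⟨i, hi⟩ := ne_iff.1 hpq
      exact ⟨{i}, fun h => (hi (h i (Finset.mem_singleton_self i))).elim⟩
  choose t ht using hsep
  refine ⟨(I ×ˢ I).biUnion fun pq => t pq.1 pq.2, fun p hp q hq hpq => ht p q fun i hi => ?_⟩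
  have hmem : i ∈ (I ×ˢ I).biUnion fun pq => t pq.1 pq.2 :=
    Finset.mem_biUnion.2 ⟨(p, q), Finset.mem_product.2 ⟨hp, hq⟩, hi⟩
  exact congrFun hpq ⟨i, hmem⟩

def finitelyDependent (ι B A : Type*) [AddGroup A] : AddSubgroup ((ι → B) → A) where
  carrier := {x | ∃ s : Finset ι, DependsOn x s}
  zero_mem' := ⟨∅, fun _ _ _ => rfl⟩
  add_mem' := by
    rintro x y ⟨s, hx⟩ ⟨t, hy⟩
    classical
    refine ⟨s ∪ t, fun p q hpq => show x p + y p = x q + y q from congrArg₂ (· + ·) ?_ ?_⟩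
    · exact hx.mono (by simp) hpq
    · exact hy.mono (by simp) hpq
  neg_mem' := by
    rintro x ⟨s, hx⟩
    exact ⟨s, fun p q hpq => congrArg Neg.neg (hx hpq)⟩

theorem dense_finitelyDependent (A : Type*) [AddGroup A] [TopologicalSpace A] [Nonempty B] :
    Dense (finitelyDependent ι B A : Set ((ι → B) → A)) := by
  refine dense_iff_inter_open.2 fun U hU ⟨x, hx⟩ => ?_
  obtain ⟨I, u, hu, hxU⟩ := isOpen_pi_iff.1 hU x hx
  obtain ⟨s, hs⟩ := I.exists_injOn_restrict
  let y : (ι → B) → A := fun p => x (invFunOn s.restrict I (s.restrict p))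
  have hyx : ∀ p ∈ I, y p = x p := fun p hp => congrArg x (hs.leftInvOn_invFunOn hp)
  refine ⟨y, hxU fun p hp => ?_, s, fun p q hpq => ?_⟩
  · rw [hyx p hp]
    exact (hu p hp).2
  · exact congrArg (fun b => x (invFunOn s.restrict I b)) (funext fun i => hpq i i.2)

theorem mk_finitelyDependent_le {ι : Type u} {B : Type v} {A : Type w} [AddGroup A] [Finite A]
    [Finite B] [Infinite ι] : #(finitelyDependent ι B A) ≤ lift.{max v w} #ι := by
  have hfin (s : Finset ι) : {x : (ι → B) → A | DependsOn x s}.Finite :=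
    (finite_range fun g : (↥(s : Set ι) → B) → A => g ∘ (s : Set ι).domRestrict).subset
      fun x hx => (dependsOn_iff_exists_comp.1 hx).imp fun g hg => hg.symm
  have hunion : (finitelyDependent ι B A : Set ((ι → B) → A)) =
      ⋃ s : Finset ι, {x | DependsOn x s} := by
    ext x; simp [finitelyDependent]
  have := mk_iUnion_le_lift fun s : Finset ι => {x : (ι → B) → A | DependsOn x s}
  rw [← hunion, lift_id'.{u, max u v w}, mk_finset_of_infinite, lift_umax.{u, max v w}] at this
  refine this.trans ((mul_le_mul_right (ciSup_le' fun s => ?_) _).trans_eq (mul_aleph0_eq ?_))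
  · simpa using (hfin s).lt_aleph0.le
  · exact aleph0_le_lift.2 (infinite_iff.1 ‹_›)

end FinitelyDependent

section RankRefinement

variable {X Y T : Type*} [TopologicalSpace Y] [Preorder T] {f : X → Y} {r : X → T}

/-- The layers `r ⁻¹' {i}` are ordered by their rank `i`; the added open sets are the unions of
final segments of layers. -/
abbrev rankRefinement (f : X → Y) (r : X → T) : TopologicalSpace X :=
  .induced f ‹_› ⊓ .induced r (upperSet T)

theorem nhds_rankRefinement (x : X) :
    @nhds X (rankRefinement f r) x = comap f (𝓝 (f x)) ⊓ 𝓟 {p | r x ≤ r p} := by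
  let := upperSet T
  rw [rankRefinement, nhds_inf, nhds_induced, nhds_induced, IsUpperSet.nhds_eq_principal_Ici (r x),
    comap_principal]
  rfl

theorem t25Space_rankRefinement [T25Space Y] (hf : Injective f) :
    @T25Space X (rankRefinement f r) :=
  @T25Space.of_injective_continuous X Y (rankRefinement f r) _ _ f hf
    (continuous_inf_dom_left continuous_induced_dom)

theorem mem_closure_rankRefinement_fiber {i : T} (hi : Dense (f '' (r ⁻¹' {i}))) {x : X}
    (hx : r x ≤ i) : x ∈ closure[rankRefinement f r] (r ⁻¹' {i}) := by
  let := rankRefinement f r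
  refine mem_closure_iff_nhds.2 fun t ht => ?_
  rw [nhds_rankRefinement, mem_inf_principal, mem_comap] at ht
  obtain ⟨U, hU, hUt⟩ := ht
  obtain ⟨_, ⟨p, hp, rfl⟩, hpU⟩ := hi.inter_nhds_nonempty hU
  exact ⟨p, hUt hpU (hx.trans_eq hp.symm), hp⟩

theorem Dense.exists_rank_ge_of_rankRefinement {D : Set X} (hD : @Dense X (rankRefinement f r) D)
    (x : X) : ∃ p ∈ D, r x ≤ r p :=
  @Dense.inter_nhds_nonempty X (rankRefinement f r) _ _ _ hD <| by
    rw [nhds_rankRefinement]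
    exact mem_inf_of_right (mem_principal_self _)

end RankRefinement

theorem Cardinal.IsRegular.exists_gt_of_mk_lt {c : Cardinal.{u}} (hc : c.IsRegular)
    {s : Set c.ord.ToType} (hs : #s < c) : ∃ i, ∀ x ∈ s, x < i :=
  not_isCofinal_iff.1 fun h => (Order.cof_le h).not_gt (by rwa [Ordinal.cof_toType, hc.cof_ord])

section Cosets

variable {G T : Type*} [AddGroup G] {H : AddSubgroup G} {g : T → G}

theorem injective_add_of_injective_mk (hg : Injective fun i => (g i : G ⧸ H)) :
    Injective fun p : T × H => g p.1 + p.2 := by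
  rintro ⟨i, a⟩ ⟨j, b⟩ h
  have hij : i = j := hg <| by
    simpa only [QuotientAddGroup.mk_add_of_mem _ a.2, QuotientAddGroup.mk_add_of_mem _ b.2]
      using congrArg (fun y : G => (y : G ⧸ H)) h
  subst hij
  exact Prod.ext rfl (Subtype.ext (add_left_cancel h))

theorem dense_image_fiber_add [TopologicalSpace G] [ContinuousConstVAdd G G]
    (hH : Dense (H : Set G)) (i : T) :
    Dense ((fun p : T × H => g p.1 + p.2) '' (Prod.fst ⁻¹' {i})) :=
  (hH.vadd (g i)).mono <| by
    rintro _ ⟨a, ha, rfl⟩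
    exact ⟨(i, ⟨a, ha⟩), rfl, rfl⟩

theorem le_mk_quotient_of_mk_lt {c : Cardinal.{u}} {G : Type u} [AddGroup G] {H : AddSubgroup G}
    (hc : ℵ₀ ≤ c) (hH : #H < c) (hG : c ≤ #G) : c ≤ #(G ⧸ H) := by
  by_contra! hGH
  have hmk : #G = #(G ⧸ H) * #H := by
    rw [mk_congr AddSubgroup.addGroupEquivQuotientProdAddSubgroup, mk_prod, lift_id, lift_id]
  exact (hmk ▸ hG).not_gt (mul_lt_of_lt hc hGH hH)

end Cosets

theorem stmt_10 (lam : Cardinal.{u}) (hlam : ℵ₀ ≤ lam)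
    (h : Order.succ ((2 : Cardinal.{u}) ^ lam) < ((2 : Cardinal.{u}) ^ ((2 : Cardinal.{u}) ^ lam))) :
    ∃ (X : Type u) (_ : TopologicalSpace X), T25Space X ∧
      DominatingPair X (Order.succ ((2 : Cardinal.{u}) ^ lam)) lam ∧
      ∀ D : Set X, Dense D → lam < #D := by
  set κ := (2 : Cardinal.{u}) ^ lam
  set θ := Order.succ (Order.succ κ)
  have hθ : θ.IsRegular := isRegular_succ ((hlam.trans (cantor lam).le).trans (Order.le_succ κ))
  have hlamθ : lam < θ := ((cantor lam).trans_le (Order.le_succ κ)).trans (Order.lt_succ _)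
  have : Infinite lam.out := infinite_iff.2 (by rwa [mk_out])
  -- the Cantor cube `{0,1}^(2^λ)`, indexed by `λ → Bool`
  let G := (lam.out → Bool) → Fin 2
  let H := finitelyDependent lam.out Bool (Fin 2)
  have hH : #H ≤ lam := by
    simpa [mk_out] using mk_finitelyDependent_le (ι := lam.out) (B := Bool) (A := Fin 2)
  have hG : #G = 2 ^ κ := by simp [G, κ, mk_out]
  have hGH : θ ≤ #(G ⧸ H) :=
    le_mk_quotient_of_mk_lt hθ.aleph0_le (hH.trans_lt hlamθ) (hG ▸ Order.succ_le_of_lt h)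
  obtain ⟨e⟩ : Nonempty (θ.ord.ToType ↪ G ⧸ H) := by rwa [← Cardinal.le_def, mk_ord_toType]
  let g : θ.ord.ToType → G := fun i => (e i).out
  let f := fun p : θ.ord.ToType × H => g p.1 + p.2
  have hf : Injective f := injective_add_of_injective_mk (g := g) (by simpa [g] using e.injective)
  have hdense (i : θ.ord.ToType) : Dense (f '' (Prod.fst ⁻¹' {i})) :=
    dense_image_fiber_add (G := G) (g := g) (dense_finitelyDependent _) i
  refine ⟨_, rankRefinement f Prod.fst, t25Space_rankRefinement hf, fun A hA => ?_, fun D hD => ?_⟩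
  · obtain ⟨i, hi⟩ := hθ.exists_gt_of_mk_lt (s := Prod.fst '' A)
      (mk_image_le.trans_lt (hA.trans_lt (Order.lt_succ _)))
    refine ⟨Prod.fst ⁻¹' {i}, ?_, fun x hx =>
      mem_closure_rankRefinement_fiber (hdense i) (hi _ (mem_image_of_mem _ hx)).le⟩
    rw [preimage_fst_singleton_eq_range]
    exact mk_range_le.trans hH
  · by_contra! hDlam
    obtain ⟨i, hi⟩ := hθ.exists_gt_of_mk_lt (s := Prod.fst '' D)
      (mk_image_le.trans_lt (hDlam.trans_lt hlamθ))
    obtain ⟨p, hpD, hip⟩ := hD.exists_rank_ge_of_rankRefinement (i, 0)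
    exact (hi _ (mem_image_of_mem _ hpD)).not_ge hip
end

section
/- Let κ be an uncountable regular cardinal and ℐ a κ-complete, κ-tall proper ideal on κ containing all subsets of size < κ. Then κ is a caliber of the subspace Σ_ℐ(κ) = {x ∈ {0,1}^κ : supp(x) ∈ ℐ} of the Cantor cube {0,1}^κ. -/
open Cardinal Topology Set

universe u

/-!
A nonempty open subset of `Σ_𝓘` contains a basic open set, which prescribes finitely many
coordinates. So it suffices to show that among κ finite conditions, κ many are met by a single
point with support in `𝓘`. By pigeonhole all supports have size at most some `n`; induct on `n`.
If some coordinate lies in κ supports, fix its value on κ of them and remove it. Otherwise, by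
regularity, a maximal family of pairwise disjoint supports has size κ. Either κ of these conditions
ask only for zeros, and the zero point meets them; or κ of them each ask for a `1` at some
coordinate `t α`, these coordinates are distinct, and tallness gives `T ∈ 𝓘` inside them hitting
κ supports: put `1` on `T` and remove `T` from the supports. Only finitely many sets from `𝓘` get
fixed along the way, so the resulting point still has support in `𝓘`.
-/

theorem exists_finset_forall_eqOn_mem_of_isOpen {ι X : Type*} [TopologicalSpace X]
    [DiscreteTopology X] {S : Set (ι → X)} {U : Set S} (hU : IsOpen U) {p : S} (hp : p ∈ U) :
    ∃ F : Finset ι, ∀ z : S, EqOn (z : ι → X) p F → z ∈ U := by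
  obtain ⟨V, hV, hVU⟩ := (mem_nhds_subtype S p U).1 (hU.mem_nhds hp)
  rw [nhds_pi, Filter.mem_pi'] at hV
  obtain ⟨F, t, ht, hFV⟩ := hV
  refine ⟨F, fun z hz => hVU (hFV fun i hi => ?_)⟩
  rw [hz hi]
  simpa only [nhds_discrete, Filter.mem_pure] using ht i

section

variable {κ : Cardinal.{u}} {ι β : Type u}

theorem exists_card_sep_eq_of_countable (hκ : κ.IsRegular) (hκ₀ : ℵ₀ < κ) {γ : Type}
    [Countable γ] (f : ι → γ) {J : Set ι} (hJ : #J = κ) : ∃ c, #{α ∈ J | f α = c} = κ := by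
  obtain ⟨c, t, htJ, hκt, hc⟩ := infinite_pigeonhole_set (fun α : J => ULift.up.{u} (f α)) κ
    hJ.ge hκ.aleph0_le (by rw [hκ.cof_ord]; exact mk_le_aleph0.trans_lt hκ₀)
  refine ⟨c.down, le_antisymm (hJ ▸ mk_le_mk_of_subset (sep_subset _ _))
    (hκt.trans (mk_le_mk_of_subset fun α hα => ⟨htJ hα, congrArg ULift.down (hc hα)⟩))⟩

theorem exists_pairwiseDisjoint_subset_card_eq (hκ : κ.IsRegular) {J : Set ι} (hJ : #J = κ)
    (s : ι → Finset β) (hs : ∀ b, #{α ∈ J | b ∈ s α} < κ) :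
    ∃ M ⊆ J, #M = κ ∧ M.PairwiseDisjoint s := by
  obtain ⟨M, ⟨hMJ, hMs⟩, hMmax⟩ := zorn_subset {M | M ⊆ J ∧ M.PairwiseDisjoint s}
    fun c hc hchain => ⟨⋃₀ c, ⟨sUnion_subset fun M hM => (hc hM).1,
      (pairwiseDisjoint_sUnion hchain.directedOn).2 fun M hM => (hc hM).2⟩,
      fun _ => subset_sUnion_of_mem⟩
  refine ⟨M, hMJ, (hJ ▸ mk_le_mk_of_subset hMJ).antisymm (not_lt.1 fun hMκ => ?_), hMs⟩
  -- if `M` were small, some member of `J` would avoid `M` and all the supports over `M`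
  set B := ⋃ a ∈ M, ⋃ b ∈ (s a : Set β), {α ∈ J | b ∈ s α}
  have hB : #B < κ := (card_biUnion_lt_iff_forall_of_isRegular hκ hMκ).2 fun a _ =>
    (card_biUnion_lt_iff_forall_of_isRegular hκ
      ((s a).finite_toSet.lt_aleph0.trans_le hκ.aleph0_le)).2 fun b _ => hs b
  obtain ⟨α, hαJ, hαMB⟩ : ∃ α ∈ J, α ∉ M ∪ B := not_subset.1 fun hJMB =>
    ((mk_le_mk_of_subset hJMB).trans_lt
      ((mk_union_le M B).trans_lt (add_lt_of_lt hκ.aleph0_le hMκ hB))).ne hJ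
  have hαM : insert α M ⊆ M := hMmax ⟨insert_subset hαJ hMJ, hMs.insert fun a ha _ =>
    Finset.disjoint_left.2 fun b hbα hba =>
      hαMB (Or.inr (mem_biUnion ha (mem_biUnion hba ⟨hαJ, hbα⟩)))⟩ (subset_insert α M)
  exact hαMB (Or.inl (hαM (mem_insert α M)))

theorem card_sep_mem_eq_of_injOn {α : Type u} {f : ι → α} {K : Set ι} (hf : InjOn f K)
    {T : Set α} (hT : T ⊆ f '' K) : #{a ∈ K | f a ∈ T} = #T := by
  have himage : f '' {a ∈ K | f a ∈ T} = T :=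
    (image_subset_iff.2 fun a ha => ha.2).antisymm fun b hb => by
      obtain ⟨a, ha, rfl⟩ := hT hb
      exact ⟨a, ⟨ha, hb⟩, rfl⟩
  rw [← mk_image_eq_of_injOn _ _ (hf.mono (sep_subset _ _)), himage]

def IsTall (κ : Cardinal.{u}) (𝓘 : Order.Ideal (Set β)) : Prop :=
  ∀ S : Set β, #S = κ → ∃ T ∈ 𝓘, T ⊆ S ∧ #T = κ

/-- The basic open sets `{y | EqOn y (x α) (s α)}`, `α ∈ K`, of the Cantor cube have a common
point whose support lies in `𝓘`. -/
def Realizable (𝓘 : Order.Ideal (Set β)) (s : ι → Finset β) (x : ι → β → Bool) (K : Set ι) :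
    Prop :=
  ∃ y : β → Bool, {b | y b = true} ∈ 𝓘 ∧ ∀ α ∈ K, EqOn y (x α) (s α)

/-- The values on `T` can be fixed once and for all, leaving the strictly smaller supports
`s α \ T`. -/
def Pinned (𝓘 : Order.Ideal (Set β)) (s : ι → Finset β) (x : ι → β → Bool) (K : Set ι) : Prop :=
  ∃ T ∈ 𝓘, ∃ c : β → Bool, ∀ α ∈ K, (∃ b ∈ s α, b ∈ T) ∧ ∀ b ∈ s α, b ∈ T → x α b = c b

variable {𝓘 : Order.Ideal (Set β)} {s : ι → Finset β} {x : ι → β → Bool} {K : Set ι}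

theorem realizable_of_forall_eq_false (h : ∀ α ∈ K, ∀ b ∈ s α, x α b = false) :
    Realizable 𝓘 s x K :=
  ⟨fun _ => false, 𝓘.lower (fun _ hb => Bool.false_ne_true hb |>.elim) 𝓘.bot_mem,
    fun α hα b hb => (h α hα b hb).symm⟩

open Classical in
theorem Realizable.of_filter_notMem {T : Set β} (hT : T ∈ 𝓘) {c : β → Bool}
    (hc : ∀ α ∈ K, ∀ b ∈ s α, b ∈ T → x α b = c b)
    (h : Realizable 𝓘 (fun α => (s α).filter (· ∉ T)) x K) : Realizable 𝓘 s x K := by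
  obtain ⟨y, hy, hyx⟩ := h
  refine ⟨T.piecewise c y, 𝓘.lower (fun b hb => ?_) (𝓘.sup_mem hT hy), fun α hα b hb => ?_⟩
  · by_cases hbT : b ∈ T
    · exact Or.inl hbT
    · exact Or.inr (by simpa [piecewise_eq_of_notMem _ _ _ hbT] using hb)
  · by_cases hbT : b ∈ T
    · rw [piecewise_eq_of_mem _ _ _ hbT, hc α hα b hb hbT]
    · rw [piecewise_eq_of_notMem _ _ _ hbT]
      exact hyx α hα (Finset.mem_filter.2 ⟨hb, hbT⟩)

theorem exists_pinned_of_card_sep_mem_eq (hκ : κ.IsRegular) (hκ₀ : ℵ₀ < κ)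
    (hsingleton : ∀ b, {b} ∈ 𝓘) {J : Set ι} {b₀ : β} (h : #{α ∈ J | b₀ ∈ s α} = κ) :
    ∃ K ⊆ J, #K = κ ∧ Pinned 𝓘 s x K := by
  obtain ⟨c, hc⟩ := exists_card_sep_eq_of_countable hκ hκ₀ (fun α => x α b₀) h
  refine ⟨_, (sep_subset _ _).trans (sep_subset _ _), hc, {b₀}, hsingleton b₀, fun _ => c,
    fun α hα => ⟨⟨b₀, hα.1.2, rfl⟩, fun b _ hb => ?_⟩⟩
  rw [mem_singleton_iff.1 hb]
  exact hα.2

theorem exists_realizable_or_pinned_of_pairwiseDisjoint (hκ : κ.IsRegular) (hκ₀ : ℵ₀ < κ)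
    (htall : IsTall κ 𝓘) {M : Set ι} (hM : #M = κ) (hdisj : M.PairwiseDisjoint s) :
    ∃ K ⊆ M, #K = κ ∧ (Realizable 𝓘 s x K ∨ Pinned 𝓘 s x K) := by
  obtain ⟨c, hc⟩ :=
    exists_card_sep_eq_of_countable hκ hκ₀ (fun α => decide (∃ b ∈ s α, x α b = true)) hM
  set M₁ := {α ∈ M | decide (∃ b ∈ s α, x α b = true) = c}
  cases c with
  | false =>
    refine ⟨M₁, sep_subset _ _, hc, Or.inl (realizable_of_forall_eq_false fun α hα b hb => ?_)⟩
    have hnone : ¬∃ b ∈ s α, x α b = true := of_decide_eq_false hα.2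
    exact Bool.eq_false_iff.2 fun hb' => hnone ⟨b, hb, hb'⟩
  | true =>
    have : Nonempty β := by
      obtain ⟨α, hα⟩ := mk_ne_zero_iff.1 (hc.trans_ne (hκ.pos).ne')
      obtain ⟨b, -⟩ := of_decide_eq_true hα.2
      exact ⟨b⟩
    choose! t hts htx using fun α (hα : α ∈ M₁) => of_decide_eq_true hα.2
    have ht : InjOn t M₁ := fun α hα α' hα' htt => hdisj.elim_finset hα.1 hα'.1 (t α)
      (hts α hα) (htt ▸ hts α' hα')
    obtain ⟨T, hT, hTt, hTκ⟩ := htall _ ((mk_image_eq_of_injOn t M₁ ht).trans hc)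
    refine ⟨{α ∈ M₁ | t α ∈ T}, (sep_subset _ _).trans (sep_subset _ _),
      (card_sep_mem_eq_of_injOn ht hTt).trans hTκ, Or.inr ⟨T, hT, fun _ => true,
        fun α hα => ⟨⟨t α, hts α hα.1, hα.2⟩, fun b hb hbT => ?_⟩⟩⟩
    obtain ⟨α', hα', rfl⟩ := hTt hbT
    -- the support of `α` contains `t α'`, so `α = α'` by disjointness
    rw [hdisj.elim_finset hα.1.1 hα'.1 (t α') hb (hts α' hα')]
    exact htx α' hα'

theorem exists_realizable_or_pinned (hκ : κ.IsRegular) (hκ₀ : ℵ₀ < κ) (htall : IsTall κ 𝓘)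
    (hsingleton : ∀ b, {b} ∈ 𝓘) {J : Set ι} (hJ : #J = κ) :
    ∃ K ⊆ J, #K = κ ∧ (Realizable 𝓘 s x K ∨ Pinned 𝓘 s x K) := by
  by_cases hcommon : ∃ b, #{α ∈ J | b ∈ s α} = κ
  · obtain ⟨b, hb⟩ := hcommon
    obtain ⟨K, hKJ, hK, hpin⟩ := exists_pinned_of_card_sep_mem_eq hκ hκ₀ hsingleton (x := x) hb
    exact ⟨K, hKJ, hK, Or.inr hpin⟩
  · have hsmall : ∀ b, #{α ∈ J | b ∈ s α} < κ := fun b =>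
      (hJ ▸ mk_le_mk_of_subset (sep_subset _ _)).lt_of_ne fun h => hcommon ⟨b, h⟩
    obtain ⟨M, hMJ, hM, hdisj⟩ := exists_pairwiseDisjoint_subset_card_eq hκ hJ s hsmall
    obtain ⟨K, hKM, hK, hK'⟩ :=
      exists_realizable_or_pinned_of_pairwiseDisjoint hκ hκ₀ htall hM hdisj
    exact ⟨K, hKM.trans hMJ, hK, hK'⟩

theorem exists_realizable_of_card_le (hκ : κ.IsRegular) (hκ₀ : ℵ₀ < κ) (htall : IsTall κ 𝓘)
    (hsingleton : ∀ b, {b} ∈ 𝓘) (x : ι → β → Bool) (n : ℕ) (s : ι → Finset β) {J : Set ι}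
    (hJ : #J = κ) (hs : ∀ α ∈ J, (s α).card ≤ n) : ∃ K ⊆ J, #K = κ ∧ Realizable 𝓘 s x K := by
  classical
  induction n generalizing s J with
  | zero =>
    refine ⟨J, subset_rfl, hJ, realizable_of_forall_eq_false fun α hα b hb => ?_⟩
    simp [Finset.card_eq_zero.1 (Nat.le_zero.1 (hs α hα))] at hb
  | succ n ih =>
    obtain ⟨K, hKJ, hK, hreal | ⟨T, hT, c, hTc⟩⟩ := exists_realizable_or_pinned hκ hκ₀ htall
      hsingleton (s := s) (x := x) hJ
    · exact ⟨K, hKJ, hK, hreal⟩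
    · have hcard : ∀ α ∈ K, ((s α).filter (· ∉ T)).card ≤ n := fun α hα =>
        Nat.le_of_lt_succ ((Finset.card_lt_card (Finset.filter_ssubset.2
          (by simpa using (hTc α hα).1))).trans_le (hs α (hKJ hα)))
      obtain ⟨K', hK'K, hK', hreal⟩ := ih _ hK hcard
      exact ⟨K', hK'K.trans hKJ, hK', hreal.of_filter_notMem hT fun α hα => (hTc α (hK'K hα)).2⟩

theorem exists_realizable_subset (hκ : κ.IsRegular) (hκ₀ : ℵ₀ < κ) (htall : IsTall κ 𝓘)
    (hsingleton : ∀ b, {b} ∈ 𝓘) {J : Set ι} (hJ : #J = κ) (s : ι → Finset β) (x : ι → β → Bool) :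
    ∃ K ⊆ J, #K = κ ∧ Realizable 𝓘 s x K := by
  obtain ⟨n, hn⟩ := exists_card_sep_eq_of_countable hκ hκ₀ (fun α => (s α).card) hJ
  obtain ⟨K, hKJ, hK, hreal⟩ := exists_realizable_of_card_le hκ hκ₀ htall hsingleton x n s hn
    fun α hα => hα.2.le
  exact ⟨K, hKJ.trans (sep_subset _ _), hK, hreal⟩

end

theorem stmt_12_general (k : Cardinal.{u}) (hk : k.IsRegular) (huncount : ℵ₀ < k)
    (I : Set (Set k.out))
    (hdown : ∀ A ∈ I, ∀ B ⊆ A, B ∈ I)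
    (hcomplete : ∀ 𝒮 ⊆ I, #𝒮 < k → ⋃₀ 𝒮 ∈ I)
    (hsmall : ∀ A : Set k.out, #A < k → A ∈ I)
    (htall : ∀ S : Set k.out, #S = k → ∃ J ∈ I, J ⊆ S ∧ #J = k) :
    ∀ U : k.out → Set {x : k.out → Bool // {α | x α = true} ∈ I},
      (∀ α, IsOpen (U α) ∧ (U α).Nonempty) →
      ∃ J : Set k.out, #J = k ∧ (⋂ α ∈ J, U α).Nonempty := by
  intro U hU
  choose p hp using fun α => (hU α).2
  choose F hF using fun α => exists_finset_forall_eqOn_mem_of_isOpen (hU α).1 (hp α)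
  have hI : Order.IsIdeal I :=
    ⟨fun A B hBA hA => hdown A hA B hBA, ⟨∅, hsmall ∅ (by simpa using hk.pos)⟩,
      fun A hA B hB => ⟨A ∪ B, sUnion_pair A B ▸ hcomplete _ (pair_subset hA hB)
        ((toFinite _).lt_aleph0.trans huncount), subset_union_left, subset_union_right⟩⟩
  obtain ⟨J, -, hJ, y, hy, hyJ⟩ := exists_realizable_subset (𝓘 := hI.toIdeal) hk huncount htall
    (fun b => hsmall {b} (by simpa using one_lt_aleph0.trans huncount))
    (mk_univ.trans k.mk_out) F fun α => (p α).val
  exact ⟨J, hJ, ⟨y, hy⟩, mem_iInter₂.2 fun α hα => hF α _ (hyJ α hα)⟩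

theorem stmt_12 (k : Cardinal.{u}) (hk : k.IsRegular) (huncount : ℵ₀ < k)
    (I : Set (Set k.out))
    (hproper : Set.univ ∉ I)
    (hdown : ∀ A ∈ I, ∀ B ⊆ A, B ∈ I)
    (hcomplete : ∀ 𝒮 ⊆ I, #𝒮 < k → ⋃₀ 𝒮 ∈ I)
    (hsmall : ∀ A : Set k.out, #A < k → A ∈ I)
    (htall : ∀ S : Set k.out, #S = k → ∃ J ∈ I, J ⊆ S ∧ #J = k) :
    ∀ U : k.out → Set {x : k.out → Bool // {α | x α = true} ∈ I},
      (∀ α, IsOpen (U α) ∧ (U α).Nonempty) →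
      ∃ J : Set k.out, #J = k ∧ (⋂ α ∈ J, U α).Nonempty :=
  stmt_12_general k hk huncount I hdown hcomplete hsmall htall
end

section
/- Let κ be an uncountable regular cardinal and ℐ a κ-complete proper ideal on κ containing all subsets of size < κ. Then for every λ < κ, (κ, λ) is not a pinning down pair for the subspace Σ_ℐ(κ) = {x ∈ {0,1}^κ : supp(x) ∈ ℐ} of the Cantor cube. -/
open Cardinal Topology Set

universe u

theorem not_pinningDownPair_of_forall_exists_disjoint {X ι : Type u} [TopologicalSpace X]
    {k lam : Cardinal.{u}} (U : ι → Set X) (hU : ∀ i, IsOpen (U i) ∧ (U i).Nonempty)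
    (hι : #ι ≤ k) (hmiss : ∀ B : Set X, #B ≤ lam → ∃ i, Disjoint B (U i)) :
    ¬ PinningDownPair X k lam := by
  intro h
  obtain ⟨B, hB, hmeet⟩ := h (range U) (forall_mem_range.2 hU) (mk_range_le.trans hι)
  obtain ⟨i, hi⟩ := hmiss B hB
  exact (hmeet (U i) (mem_range_self i)).ne_empty hi.inter_eq

/-- The paper's `Σ_ℐ(κ)`, with `α = κ`. -/
abbrev SigmaIdeal {α : Type u} (I : Set (Set α)) : Type u :=
  {x : α → Bool // {a | x a = true} ∈ I}

section SigmaIdeal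

variable {α : Type u} {I : Set (Set α)}

theorem SigmaIdeal.isOpen_setOf_apply_eq_true (i : α) :
    IsOpen {x : SigmaIdeal I | x.1 i = true} :=
  (isOpen_discrete ({true} : Set Bool)).preimage
    ((continuous_apply (A := fun _ : α => Bool) i).comp continuous_subtype_val)

theorem SigmaIdeal.nonempty_setOf_apply_eq_true {i : α} (hi : {i} ∈ I) :
    {x : SigmaIdeal I | x.1 i = true}.Nonempty := by
  classical
  refine ⟨⟨fun a => decide (a = i), ?_⟩, by simp⟩
  simpa using hi

/-- The union of the supports of the points of `B` lies in the proper ideal `I`. -/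
theorem SigmaIdeal.exists_forall_apply_ne_true_of_mk_lt {k : Cardinal.{u}}
    (hproper : Set.univ ∉ I) (hcomplete : ∀ 𝒮 ⊆ I, #𝒮 < k → ⋃₀ 𝒮 ∈ I)
    (B : Set (SigmaIdeal I)) (hB : #B < k) :
    ∃ i, ∀ x ∈ B, x.1 i ≠ true := by
  set supports := (fun x : SigmaIdeal I => {a | x.1 a = true}) '' B
  have hunion : ⋃₀ supports ∈ I :=
    hcomplete _ (by rintro _ ⟨x, -, rfl⟩; exact x.2) (mk_image_le.trans_lt hB)
  obtain ⟨i, hi⟩ := ne_univ_iff_exists_notMem _ |>.1 fun h => hproper (h ▸ hunion)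
  exact ⟨i, fun x hx hxi => hi ⟨_, ⟨x, hx, rfl⟩, hxi⟩⟩

end SigmaIdeal

theorem stmt_13_general (k : Cardinal.{u}) (huncount : ℵ₀ < k)
    (I : Set (Set k.out))
    (hproper : Set.univ ∉ I)
    (hcomplete : ∀ 𝒮 ⊆ I, #𝒮 < k → ⋃₀ 𝒮 ∈ I)
    (hsmall : ∀ A : Set k.out, #A < k → A ∈ I) :
    ∀ lam : Cardinal.{u}, lam < k →
      ¬ PinningDownPair {x : k.out → Bool // {α | x α = true} ∈ I} k lam := by
  intro lam hlam
  have hsingleton (i : k.out) : {i} ∈ I :=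
    hsmall _ (by simpa using one_lt_aleph0.trans huncount)
  refine not_pinningDownPair_of_forall_exists_disjoint (X := SigmaIdeal I)
    (fun i => {x | x.1 i = true})
    (fun i => ⟨SigmaIdeal.isOpen_setOf_apply_eq_true i,
      SigmaIdeal.nonempty_setOf_apply_eq_true (hsingleton i)⟩)
    (mk_out k).le fun B hB => ?_
  obtain ⟨i, hi⟩ :=
    SigmaIdeal.exists_forall_apply_ne_true_of_mk_lt hproper hcomplete B (hB.trans_lt hlam)
  exact ⟨i, disjoint_left.2 hi⟩

theorem stmt_13 (k : Cardinal.{u}) (hk : k.IsRegular) (huncount : ℵ₀ < k)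
    (I : Set (Set k.out))
    (hproper : Set.univ ∉ I)
    (hdown : ∀ A ∈ I, ∀ B ⊆ A, B ∈ I)
    (hcomplete : ∀ 𝒮 ⊆ I, #𝒮 < k → ⋃₀ 𝒮 ∈ I)
    (hsmall : ∀ A : Set k.out, #A < k → A ∈ I) :
    ∀ lam : Cardinal.{u}, lam < k →
      ¬ PinningDownPair {x : k.out → Bool // {α | x α = true} ∈ I} k lam :=
  stmt_13_general k huncount I hproper hcomplete hsmall
end

section
/- For every infinite cardinal λ, the set X = {0,1}^{2^λ} with the topology τ = {U \ A : U open in the product topology, |A| ≤ λ} is a Urysohn space in which every subset of cardinality λ is closed, (κ,λ) is a pinning down pair for X for every κ < 2^{2^λ}, and d(X) = λ⁺. -/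
/-!
The refined topology is finer than the compact Hausdorff product topology, hence Urysohn, and
every set of size `≤ λ` is closed in it, so no such set is dense.
Fix a product-dense set `D` of size `λ` in `X = {0,1}^{2^λ}` (Hewitt–Marczewski–Pondiczery).
A translate `a ∆ D` is again product-dense, and it misses a given set `A` unless `a ∈ A ∆ D`,
a set of size `≤ |A| λ`; a translate missing `A` meets every nonempty basic set `U \ A`.
Choosing one translate that misses the union of `< 2^{2^λ}` small sets gives the pinning down
pairs, and the union of `λ⁺` translates is a dense set of size `λ⁺`.
-/

open Cardinal Topology Set

universe u

open TopologicalSpace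
open scoped symmDiff

section Refinement

variable {X : Type u} [TopologicalSpace X] {lam : Cardinal.{u}}

variable (X lam) in
def smallDiffs : Set (Set X) :=
  {s | ∃ U A : Set X, IsOpen U ∧ #A ≤ lam ∧ s = U \ A}

variable (X lam) in
abbrev coSmallRefinement : TopologicalSpace X :=
  generateFrom (smallDiffs X lam)

theorem isOpen_coSmallRefinement_diff {U A : Set X} (hU : IsOpen U) (hA : #A ≤ lam) :
    IsOpen[coSmallRefinement X lam] (U \ A) :=
  isOpen_generateFrom_of_mem ⟨U, A, hU, hA, rfl⟩

theorem isClosed_coSmallRefinement_of_mk_le {A : Set X} (hA : #A ≤ lam) :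
    IsClosed[coSmallRefinement X lam] A :=
  @IsClosed.mk X (coSmallRefinement X lam) A <| by
    simpa [compl_eq_univ_sdiff] using isOpen_coSmallRefinement_diff (lam := lam) isOpen_univ hA

theorem coSmallRefinement_le : coSmallRefinement X lam ≤ ‹TopologicalSpace X› := fun U hU => by
  simpa using isOpen_coSmallRefinement_diff (lam := lam) hU (A := ∅) (by simp)

theorem t25Space_coSmallRefinement [T25Space X] : @T25Space X (coSmallRefinement X lam) :=
  @T25Space.of_injective_continuous X X (coSmallRefinement X lam) _ _ id Function.injective_id
    (continuous_id_of_le coSmallRefinement_le)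

theorem isTopologicalBasis_smallDiffs (hlam : ℵ₀ ≤ lam) :
    @IsTopologicalBasis X (coSmallRefinement X lam) (smallDiffs X lam) := by
  refine @IsTopologicalBasis.mk X (coSmallRefinement X lam) _ ?_ ?_ rfl
  · rintro _ ⟨U₁, A₁, hU₁, hA₁, rfl⟩ _ ⟨U₂, A₂, hU₂, hA₂, rfl⟩ x hx
    refine ⟨_, ⟨U₁ ∩ U₂, A₁ ∪ A₂, hU₁.inter hU₂, ?_, ?_⟩, hx, subset_rfl⟩
    · exact (mk_union_le _ _).trans ((add_le_add hA₁ hA₂).trans_eq (add_eq_self hlam))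
    · ext y
      simp only [mem_sdiff, mem_inter_iff, mem_union]
      tauto
  · exact sUnion_eq_univ_iff.mpr fun x =>
      ⟨Set.univ, ⟨Set.univ, ∅, isOpen_univ, by simp, by simp⟩, trivial⟩

theorem dense_coSmallRefinement_iff (hlam : ℵ₀ ≤ lam) {D : Set X} :
    @Dense X (coSmallRefinement X lam) D ↔
      ∀ U A : Set X, IsOpen U → #A ≤ lam → (U \ A).Nonempty → (U \ A ∩ D).Nonempty := by
  rw [@IsTopologicalBasis.dense_iff X (coSmallRefinement X lam) _
    (isTopologicalBasis_smallDiffs hlam)]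
  constructor
  · exact fun h U A hU hA => h _ ⟨U, A, hU, hA, rfl⟩
  · rintro h _ ⟨U, A, hU, hA, rfl⟩
    exact h U A hU hA

theorem lt_mk_of_dense_coSmallRefinement (hX : lam < #X) {D : Set X}
    (hD : @Dense X (coSmallRefinement X lam) D) : lam < #D := by
  by_contra! hDlam
  have hDuniv : D = Set.univ :=
    (@IsClosed.closure_eq X (coSmallRefinement X lam) D
      (isClosed_coSmallRefinement_of_mk_le hDlam)).symm.trans
      (@Dense.closure_eq X (coSmallRefinement X lam) D hD)
  rw [hDuniv, mk_univ] at hDlam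
  exact hDlam.not_gt hX

end Refinement

theorem Dense.diff_inter_nonempty_of_disjoint {X : Type*} [TopologicalSpace X] {E A U : Set X}
    (hE : Dense E) (hEA : Disjoint E A) (hU : IsOpen U) (hUA : (U \ A).Nonempty) :
    (U \ A ∩ E).Nonempty := by
  obtain ⟨x, hxU, hxE⟩ := hE.inter_open_nonempty U hU (hUA.mono sdiff_subset)
  exact ⟨x, ⟨hxU, hEA.notMem_of_mem_left hxE⟩, hxE⟩

theorem disjoint_symmDiff_image_of_notMem_image2 {α : Type*} [GeneralizedBooleanAlgebra α]
    {a : α} {A D : Set α} (ha : a ∉ image2 (· ∆ ·) A D) : Disjoint ((a ∆ ·) '' D) A := by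
  rw [Set.disjoint_left]
  rintro _ ⟨d, hd, rfl⟩ hA
  exact ha ⟨_, hA, d, hd, symmDiff_symmDiff_cancel_right d a⟩

section CantorCube

variable {I : Type u}

theorem continuous_symmDiff_left (a : I → Bool) : Continuous (a ∆ ·) :=
  continuous_pi fun i => (continuous_of_discreteTopology (f := (a i ∆ ·))).comp (continuous_apply i)

theorem Dense.symmDiff_image {D : Set (I → Bool)} (hD : Dense D) (a : I → Bool) :
    Dense ((a ∆ ·) '' D) :=
  (symmDiff_right_involutive a).surjective.denseRange.dense_image (continuous_symmDiff_left a) hD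

theorem exists_finset_injOn_restrict {L β : Type*} (S : Finset (L → β)) :
    ∃ F : Finset L, InjOn F.restrict (S : Set (L → β)) := by
  classical
  refine ⟨S.offDiag.attach.image fun p =>
    (Function.ne_iff.mp (Finset.mem_offDiag.mp p.2).2.2).choose, ?_⟩
  intro f hf g hg hfg
  by_contra hne
  have hfg_mem : (f, g) ∈ S.offDiag := Finset.mem_offDiag.mpr ⟨hf, hg, hne⟩
  exact (Function.ne_iff.mp hne).choose_spec <| congrFun hfg
    ⟨_, Finset.mem_image.mpr ⟨⟨(f, g), hfg_mem⟩, Finset.mem_attach _ _, rfl⟩⟩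

/-- Hewitt–Marczewski–Pondiczery for `{0,1}^{2^L}`: the functions depending on finitely many
coordinates form a dense set of size `#L`. -/
theorem exists_dense_mk_le_of_infinite (L : Type u) [Infinite L] :
    ∃ D : Set ((L → Bool) → Bool), Dense D ∧ #D ≤ #L := by
  classical
  refine ⟨⋃ F : Finset L, range fun (h : (F → Bool) → Bool) (f : L → Bool) => h (F.restrict f),
    ?_, ?_⟩
  · refine dense_iff_inter_open.mpr fun U hU ⟨φ, hφ⟩ => ?_
    obtain ⟨S, u, hu, hSU⟩ := isOpen_pi_iff.mp hU φ hφ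
    obtain ⟨F, hF⟩ := exists_finset_injOn_restrict S
    refine ⟨fun f => φ (Function.invFunOn F.restrict S (F.restrict f)), hSU fun f hf => ?_,
      mem_iUnion.mpr ⟨F, fun r => φ (Function.invFunOn F.restrict S r), rfl⟩⟩
    simpa [hF.leftInvOn_invFunOn hf] using (hu f hf).2
  · have hrange (F : Finset L) :
        #(range fun (h : (F → Bool) → Bool) (f : L → Bool) => h (F.restrict f)) ≤ #L :=
      mk_range_le.trans (mk_le_aleph0.trans (aleph0_le_mk L))
    exact (mk_iUnion_le _).trans <| (mul_le_mul' (mk_finset_of_infinite L).le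
      (ciSup_le' hrange)).trans (mul_eq_self (aleph0_le_mk L)).le

theorem exists_dense_mk_le_of_mk_le_two_power {κ : Cardinal.{u}} (hκ : ℵ₀ ≤ κ)
    (hI : #I ≤ 2 ^ κ) : ∃ D : Set (I → Bool), Dense D ∧ #D ≤ κ := by
  have : Infinite κ.out := infinite_iff.mpr (by rwa [mk_out])
  have hIL : #I ≤ #(κ.out → Bool) := by simpa [mk_out] using hI
  obtain ⟨e⟩ := hIL
  obtain ⟨D, hD, hDκ⟩ := exists_dense_mk_le_of_infinite κ.out
  refine ⟨(· ∘ e) '' D, ?_, mk_image_le.trans (by rwa [mk_out] at hDκ)⟩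
  exact e.injective.surjective_comp_right.denseRange.dense_image
    (continuous_pi fun i => continuous_apply (e i)) hD

variable {lam : Cardinal.{u}} {D : Set (I → Bool)}

theorem symmDiff_image_diff_inter_nonempty (hD : Dense D) {a : I → Bool} {U A : Set (I → Bool)}
    (ha : a ∉ image2 (· ∆ ·) A D) (hU : IsOpen U) (hUA : (U \ A).Nonempty) :
    (U \ A ∩ (a ∆ ·) '' D).Nonempty :=
  (hD.symmDiff_image a).diff_inter_nonempty_of_disjoint
    (disjoint_symmDiff_image_of_notMem_image2 ha) hU hUA

theorem pinningDownPair_coSmallRefinement (hlam : ℵ₀ ≤ lam) (hD : Dense D) (hDlam : #D ≤ lam)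
    (hX : lam < #(I → Bool)) {k : Cardinal.{u}} (hk : k < #(I → Bool)) :
    @PinningDownPair (I → Bool) (coSmallRefinement (I → Bool) lam) k lam := by
  intro 𝒰 h𝒰 h𝒰k
  have hX₀ : ℵ₀ ≤ #(I → Bool) := hlam.trans hX.le
  have hbasic : ∀ V : 𝒰, ∃ U A : Set (I → Bool), IsOpen U ∧ #A ≤ lam ∧
      (U \ A).Nonempty ∧ U \ A ⊆ V := by
    rintro ⟨V, hV⟩
    obtain ⟨x, hx⟩ := (h𝒰 V hV).2
    obtain ⟨_, ⟨U, A, hU, hA, rfl⟩, hxUA, hUAV⟩ :=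
      @IsTopologicalBasis.exists_subset_of_mem_open _ (coSmallRefinement _ lam) _
        (isTopologicalBasis_smallDiffs hlam) _ _ hx (h𝒰 V hV).1
    exact ⟨U, A, hU, hA, ⟨x, hxUA⟩, hUAV⟩
  choose U A hU hA hUA hUAV using hbasic
  have hAll : #(⋃ V, A V) < #(I → Bool) :=
    (mk_iUnion_le A).trans_lt <|
      (mul_le_mul' h𝒰k (ciSup_le' hA)).trans_lt (mul_lt_of_lt hX₀ hk hX)
  have hBad : #(image2 (· ∆ ·) (⋃ V, A V) D) < #(I → Bool) :=
    mk_image2_le.trans_lt (mul_lt_of_lt hX₀ hAll (hDlam.trans_lt hX))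
  obtain ⟨a, ha⟩ : ∃ a, a ∉ image2 (· ∆ ·) (⋃ V, A V) D := by
    by_contra! h
    exact (mk_le_mk_of_subset fun a _ => h a).not_gt (by rwa [mk_univ])
  refine ⟨(a ∆ ·) '' D, mk_image_le.trans hDlam, fun V hV => ?_⟩
  have haV : a ∉ image2 (· ∆ ·) (A ⟨V, hV⟩) D := fun h =>
    ha (image2_subset_right (subset_iUnion A ⟨V, hV⟩) h)
  obtain ⟨x, hxUA, hxD⟩ := symmDiff_image_diff_inter_nonempty hD haV (hU _) (hUA _)
  exact ⟨x, hxD, hUAV _ hxUA⟩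

theorem exists_dense_coSmallRefinement_mk_le_succ (hlam : ℵ₀ ≤ lam) (hD : Dense D)
    (hDlam : #D ≤ lam) (hX : Order.succ lam ≤ #(I → Bool)) :
    ∃ E : Set (I → Bool), @Dense _ (coSmallRefinement (I → Bool) lam) E ∧
      #E ≤ Order.succ lam := by
  obtain ⟨P, hP⟩ := le_mk_iff_exists_set.mp hX
  refine ⟨image2 (· ∆ ·) P D, (dense_coSmallRefinement_iff hlam).mpr fun U A hU hA hUA => ?_, ?_⟩
  · have hBad : #(image2 (· ∆ ·) A D) < #P :=
      mk_image2_le.trans_lt <| hP ▸ ((mul_le_mul' hA hDlam).trans_eq (mul_eq_self hlam)).trans_lt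
        (Order.lt_succ lam)
    obtain ⟨a, haP, ha⟩ := not_subset.mp fun h => (mk_le_mk_of_subset h).not_gt hBad
    obtain ⟨x, hxUA, d, hd, rfl⟩ := symmDiff_image_diff_inter_nonempty hD ha hU hUA
    exact ⟨_, hxUA, mem_image2_of_mem haP hd⟩
  · calc #(image2 (· ∆ ·) P D) ≤ #P * #D := mk_image2_le
      _ ≤ Order.succ lam * lam := mul_le_mul' hP.le hDlam
      _ = Order.succ lam := by
        rw [mul_eq_max (hlam.trans (Order.le_succ lam)) hlam, max_eq_left (Order.le_succ lam)]

end CantorCube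

theorem stmt_14 (lam : Cardinal.{u}) (hlam : ℵ₀ ≤ lam) :
    ∃ t : TopologicalSpace (((2 : Cardinal.{u}) ^ lam).out → Bool),
      (∀ s : Set (((2 : Cardinal.{u}) ^ lam).out → Bool),
          IsOpen[t] s ↔ ∃ U A : Set (((2 : Cardinal.{u}) ^ lam).out → Bool), IsOpen U ∧ #A ≤ lam ∧ s = U \ A) ∧
      @T25Space _ t ∧
      (∀ s : Set (((2 : Cardinal.{u}) ^ lam).out → Bool), #s = lam → IsClosed[t] s) ∧
      (∀ k : Cardinal.{u}, k < ((2 : Cardinal.{u}) ^ ((2 : Cardinal.{u}) ^ lam)) → @PinningDownPair _ t k lam) ∧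
      (∃ D, @Dense _ t D ∧ #D = Order.succ lam) ∧
      (∀ D, @Dense _ t D → Order.succ lam ≤ #D) := by
  set X := ((2 : Cardinal.{u}) ^ lam).out → Bool
  have hX : #X = 2 ^ (2 : Cardinal.{u}) ^ lam := by simp [X, mk_out]
  have hlamX : lam < #X := hX ▸ (cantor lam).trans (cantor _)
  obtain ⟨D, hD, hDlam⟩ := exists_dense_mk_le_of_mk_le_two_power hlam (mk_out _).le
  have hlower : ∀ E, @Dense _ (coSmallRefinement X lam) E → Order.succ lam ≤ #E := fun E hE =>
    Order.succ_le_of_lt (lt_mk_of_dense_coSmallRefinement hlamX hE)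
  obtain ⟨E, hE, hElam⟩ :=
    exists_dense_coSmallRefinement_mk_le_succ hlam hD hDlam (Order.succ_le_of_lt hlamX)
  refine ⟨coSmallRefinement X lam, fun s => ⟨fun hs => ⟨s, ∅, hs, by simp, by simp⟩, ?_⟩,
    t25Space_coSmallRefinement,
    fun s hs => isClosed_coSmallRefinement_of_mk_le hs.le,
    fun k hk => pinningDownPair_coSmallRefinement hlam hD hDlam hlamX (hX ▸ hk),
    ⟨E, hE, hElam.antisymm (hlower E hE)⟩, hlower⟩
  rintro ⟨U, A, hU, hA, rfl⟩
  exact @IsOpen.inter _ (coSmallRefinement X lam) _ _ hU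
    (@IsClosed.isOpen_compl _ (coSmallRefinement X lam) _ (isClosed_coSmallRefinement_of_mk_le hA))
end

section
/- Let ℐ be a proper ideal on ω containing all finite sets, and let 𝒱 ⊆ ℐ⁺ (the ℐ-positive sets), 𝒟 = {D_n : n < ω} ⊆ ℐ, and 𝒞 = {⟨x_n, C_n⟩ : n < ω} ⊆ ω × ℐ be countable families such that C_n ∩ D_m is finite for all n,m, and C_n ∩ C_m is finite whenever x_n ≠ x_m. Then there is E ⊆ ω such that: (i) |V ∩ E| = |V \ E| = ω for all V ∈ 𝒱; (ii) x_n ∈ E implies C_n ⊆* E and x_n ∉ E implies C_n ∩ E is finite; (iii) D_n ∩ E is finite for all n. -/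
/-!
Choose a strictly increasing sequence `h` with `h t` in the `t.unpair.1`-th member of an
enumeration of `𝒱` but outside `⋃_{m ≤ t} (C_m ∪ D_m)`: possible because an `ℐ`-positive set
minus a member of `ℐ` is infinite. The range of `h` meets every `C_n` and `D_n` finitely, and
splitting it by the parity of `t.unpair.2` gives disjoint `A`, `B`, both meeting every member
of `𝒱` infinitely; `E` will contain `A` and avoid `B`, which gives (i).

A point `k` is governed by the first `m` with `k ∈ C_m`: it enters `E` iff `x_m ∈ E`, unless it
lies in `B` or in some `D_j` with `j ≤ m`. This refers to `E` itself, so `E` is a least fixed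
point. A point of `C_n` decided against `x_n` then lies in `A` or `B`, in some `D_j` with
`j ≤ n`, or in some `C_m` with `m ≤ n` and `x_m ≠ x_n`; each of these meets `C_n` finitely.
-/

open Set

section Ideal

variable {α : Type*} {I : Set (Set α)}

theorem biUnion_mem_of_finite (hunion : ∀ A ∈ I, ∀ B ∈ I, A ∪ B ∈ I)
    (hfin : ∀ A : Set α, A.Finite → A ∈ I) {ι : Type*} {s : Set ι} (hs : s.Finite)
    {G : ι → Set α} (hG : ∀ i ∈ s, G i ∈ I) : ⋃ i ∈ s, G i ∈ I := by
  induction s, hs using Set.Finite.induction_on with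
  | empty => simpa using hfin ∅ finite_empty
  | @insert a s _ _ ih =>
    rw [biUnion_insert]
    exact hunion _ (hG a (mem_insert a s)) _ (ih fun i hi => hG i (mem_insert_of_mem a hi))

theorem infinite_diff_of_notMem (hdown : ∀ A ∈ I, ∀ B ⊆ A, B ∈ I)
    (hunion : ∀ A ∈ I, ∀ B ∈ I, A ∪ B ∈ I) (hfin : ∀ A : Set α, A.Finite → A ∈ I)
    {v S : Set α} (hv : v ∉ I) (hS : S ∈ I) : (v \ S).Infinite := fun hvS =>
  hv (hdown _ (hunion _ (hfin _ hvS) _ hS) _ (subset_sdiff_union v S))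

end Ideal

theorem exists_disjoint_split {V : Set (Set ℕ)} (hV : V.Countable) (G : ℕ → Set ℕ)
    (hVG : ∀ v ∈ V, ∀ t, (v \ ⋃ m ≤ t, G m).Infinite) :
    ∃ A B : Set ℕ, Disjoint A B ∧ (∀ v ∈ V, (v ∩ A).Infinite ∧ (v ∩ B).Infinite) ∧
      ∀ n, (A ∩ G n).Finite ∧ (B ∩ G n).Finite := by
  rcases V.eq_empty_or_nonempty with rfl | hne
  · exact ⟨∅, ∅, by simp⟩
  obtain ⟨f, rfl⟩ := hV.exists_eq_range hne
  obtain ⟨h, hmono, hh⟩ := Filter.extraction_forall_of_frequently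
    (P := fun t k => k ∈ f t.unpair.1 \ ⋃ m ≤ t, G m)
    fun t => Nat.frequently_atTop_iff_infinite.2 (hVG _ (mem_range_self _) t)
  have hG : ∀ n, (range h ∩ G n).Finite := fun n => ((finite_Iio n).image h).subset <| by
    rintro _ ⟨⟨t, rfl⟩, ht⟩
    exact ⟨t, lt_of_not_ge fun hnt => (hh t).2 (mem_iUnion₂.2 ⟨n, hnt, ht⟩), rfl⟩
  have hsplit : ∀ i (p : ℕ → Prop) (g : ℕ → ℕ), g.Injective → (∀ j, p (g j)) →
      (f i ∩ h '' {t | p t.unpair.2}).Infinite := fun i p g hg hp =>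
    infinite_of_injective_forall_mem (f := fun j => h (Nat.pair i (g j)))
      (hmono.injective.comp fun j j' hj => hg (Nat.pair_eq_pair.1 hj).2)
      fun j => ⟨by simpa using (hh (Nat.pair i (g j))).1, _, by simpa using hp j, rfl⟩
  refine ⟨h '' {t | Even t.unpair.2}, h '' {t | ¬Even t.unpair.2},
    (disjoint_image_iff hmono.injective).2 (disjoint_left.2 fun _ h₁ h₂ => h₂ h₁), ?_,
    fun n => ⟨(hG n).subset (inter_subset_inter_left _ (image_subset_range _ _)),
      (hG n).subset (inter_subset_inter_left _ (image_subset_range _ _))⟩⟩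
  rintro _ ⟨i, rfl⟩
  exact ⟨hsplit i _ _ (mul_right_injective₀ two_ne_zero) even_two_mul,
    hsplit i (fun j => ¬Even j) (fun j => 2 * j + 1) (fun a b hab => by simpa using hab)
      Nat.not_even_two_mul_add_one⟩

section Coherent

variable {α : Type*} (x : ℕ → α) (C D : ℕ → Set α) (A B : Set α)

def coherentPiece (m : ℕ) : Set α :=
  {k | k ∈ C m ∧ (∀ m' < m, k ∉ C m') ∧ k ∉ B ∧ ∀ j ≤ m, k ∉ D j}

def coherentStep : Set α →o Set α where
  toFun S := A ∪ ⋃ m ∈ x ⁻¹' S, coherentPiece C D B m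
  monotone' _ _ hST := union_subset_union_right A (biUnion_subset_biUnion_left (preimage_mono hST))

def coherentSet : Set α := OrderHom.lfp (coherentStep x C D A B)

variable {x C D A B}

theorem mem_coherentSet {k : α} : k ∈ coherentSet x C D A B ↔
    k ∈ A ∨ ∃ m, x m ∈ coherentSet x C D A B ∧ k ∈ coherentPiece C D B m := by
  conv_lhs => rw [coherentSet, ← OrderHom.map_lfp]
  simp only [coherentStep, OrderHom.coe_mk, mem_union, mem_iUnion, mem_preimage, exists_prop]
  rfl

theorem subset_coherentSet : A ⊆ coherentSet x C D A B := fun _ hk =>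
  mem_coherentSet.2 (Or.inl hk)

theorem disjoint_coherentSet (hAB : Disjoint A B) : Disjoint B (coherentSet x C D A B) := by
  refine disjoint_left.2 fun k hkB hkE => ?_
  rcases mem_coherentSet.1 hkE with hkA | ⟨m, -, -, -, hkB', -⟩
  · exact hAB.notMem_of_mem_left hkA hkB
  · exact hkB' hkB

theorem finite_biUnion_inter_of_ne (hCC : ∀ n m, x n ≠ x m → (C n ∩ C m).Finite) (n : ℕ) :
    (⋃ m ∈ {m | m ≤ n ∧ x m ≠ x n}, C n ∩ C m).Finite :=
  ((finite_Iic n).subset fun _ hm => hm.1).biUnion fun m hm => hCC n m hm.2.symm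

theorem finite_inter_coherentSet_of_notMem {n : ℕ} (hAC : (A ∩ C n).Finite)
    (hCC : ∀ n m, x n ≠ x m → (C n ∩ C m).Finite) (hxn : x n ∉ coherentSet x C D A B) :
    (C n ∩ coherentSet x C D A B).Finite := by
  refine (hAC.union (finite_biUnion_inter_of_ne hCC n)).subset ?_
  rintro k ⟨hkC, hkE⟩
  rcases mem_coherentSet.1 hkE with hkA | ⟨m, hxm, hkm, hfirst, -⟩
  · exact Or.inl ⟨hkA, hkC⟩
  · refine Or.inr (mem_biUnion ⟨?_, fun h => hxn (h ▸ hxm)⟩ ⟨hkC, hkm⟩)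
    exact le_of_not_gt fun hnm => hfirst n hnm hkC

theorem finite_diff_coherentSet_of_mem {n : ℕ} (hBC : (B ∩ C n).Finite)
    (hCD : ∀ n m, (C n ∩ D m).Finite) (hCC : ∀ n m, x n ≠ x m → (C n ∩ C m).Finite)
    (hxn : x n ∈ coherentSet x C D A B) : (C n \ coherentSet x C D A B).Finite := by
  classical
  refine ((hBC.union (finite_biUnion_inter_of_ne hCC n)).union
    ((finite_Iic n).biUnion fun j _ => hCD n j)).subset ?_
  rintro k ⟨hkC, hkE⟩
  have hex : ∃ m, k ∈ C m := ⟨n, hkC⟩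
  have hmn : Nat.find hex ≤ n := Nat.find_min' hex hkC
  by_cases hx : x (Nat.find hex) = x n
  · rcases em (k ∈ B) with hkB | hkB
    · exact Or.inl (Or.inl ⟨hkB, hkC⟩)
    obtain ⟨j, hjm, hkD⟩ : ∃ j ≤ Nat.find hex, k ∈ D j := by
      by_contra! hD
      exact hkE (mem_coherentSet.2 (Or.inr ⟨_, hx ▸ hxn, Nat.find_spec hex,
        fun _ => Nat.find_min hex, hkB, hD⟩))
    exact Or.inr (mem_iUnion₂.2 ⟨j, hjm.trans hmn, hkC, hkD⟩)
  · exact Or.inl (Or.inr (mem_biUnion ⟨hmn, hx⟩ ⟨hkC, Nat.find_spec hex⟩))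

theorem finite_inter_coherentSet {j : ℕ} (hAD : (A ∩ D j).Finite)
    (hCD : ∀ n m, (C n ∩ D m).Finite) : (D j ∩ coherentSet x C D A B).Finite := by
  refine (hAD.union ((finite_Iio j).biUnion fun m _ => hCD m j)).subset ?_
  rintro k ⟨hkD, hkE⟩
  rcases mem_coherentSet.1 hkE with hkA | ⟨m, -, hkm, -, -, hkD'⟩
  · exact Or.inl ⟨hkA, hkD⟩
  · exact Or.inr (mem_biUnion (lt_of_not_ge fun hjm => hkD' j hjm hkD) ⟨hkm, hkD⟩)

end Coherent

theorem stmt_16_general (I : Set (Set ℕ))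
    (hdown : ∀ A ∈ I, ∀ B ⊆ A, B ∈ I)
    (hunion : ∀ A ∈ I, ∀ B ∈ I, A ∪ B ∈ I)
    (hfin : ∀ A : Set ℕ, A.Finite → A ∈ I)
    (V : Set (Set ℕ)) (hV : V.Countable) (hVpos : ∀ v ∈ V, v ∉ I)
    (D : ℕ → Set ℕ) (hD : ∀ n, D n ∈ I)
    (x : ℕ → ℕ) (C : ℕ → Set ℕ) (hC : ∀ n, C n ∈ I)
    (hCD : ∀ n m, (C n ∩ D m).Finite)
    (hCC : ∀ n m, x n ≠ x m → (C n ∩ C m).Finite) :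
    ∃ E : Set ℕ,
      (∀ v ∈ V, (v ∩ E).Infinite ∧ (v \ E).Infinite) ∧
      (∀ n, (x n ∈ E → (C n \ E).Finite) ∧ (x n ∉ E → (C n ∩ E).Finite)) ∧
      (∀ n, (D n ∩ E).Finite) := by
  have hVG : ∀ v ∈ V, ∀ t, (v \ ⋃ m ∈ Iic t, (C m ∪ D m)).Infinite := fun v hv t =>
    infinite_diff_of_notMem hdown hunion hfin (hVpos v hv)
      (biUnion_mem_of_finite hunion hfin (finite_Iic t) fun m _ => hunion _ (hC m) _ (hD m))
  obtain ⟨A, B, hAB, hsplit, hfinite⟩ := exists_disjoint_split hV _ hVG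
  have hAC n : (A ∩ C n).Finite :=
    (hfinite n).1.subset (inter_subset_inter_right _ subset_union_left)
  have hAD n : (A ∩ D n).Finite :=
    (hfinite n).1.subset (inter_subset_inter_right _ subset_union_right)
  have hBC n : (B ∩ C n).Finite :=
    (hfinite n).2.subset (inter_subset_inter_right _ subset_union_left)
  have hBE := disjoint_coherentSet (x := x) (C := C) (D := D) hAB
  refine ⟨coherentSet x C D A B, fun v hv => ⟨?_, ?_⟩, fun n => ⟨?_, ?_⟩, fun n => ?_⟩
  · exact (hsplit v hv).1.mono (inter_subset_inter_right _ subset_coherentSet)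
  · exact (hsplit v hv).2.mono fun k hk => ⟨hk.1, hBE.notMem_of_mem_left hk.2⟩
  · exact finite_diff_coherentSet_of_mem (hBC n) hCD hCC
  · exact finite_inter_coherentSet_of_notMem (hAC n) hCC
  · exact finite_inter_coherentSet (hAD n) hCD

theorem stmt_16 (I : Set (Set ℕ))
    (hproper : Set.univ ∉ I)
    (hdown : ∀ A ∈ I, ∀ B ⊆ A, B ∈ I)
    (hunion : ∀ A ∈ I, ∀ B ∈ I, A ∪ B ∈ I)
    (hfin : ∀ A : Set ℕ, A.Finite → A ∈ I)
    (V : Set (Set ℕ)) (hV : V.Countable) (hVpos : ∀ v ∈ V, v ∉ I)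
    (D : ℕ → Set ℕ) (hD : ∀ n, D n ∈ I)
    (x : ℕ → ℕ) (C : ℕ → Set ℕ) (hC : ∀ n, C n ∈ I)
    (hCD : ∀ n m, (C n ∩ D m).Finite)
    (hCC : ∀ n m, x n ≠ x m → (C n ∩ C m).Finite) :
    ∃ E : Set ℕ,
      (∀ v ∈ V, (v ∩ E).Infinite ∧ (v \ E).Infinite) ∧
      (∀ n, (x n ∈ E → (C n \ E).Finite) ∧ (x n ∉ E → (C n ∩ E).Finite)) ∧
      (∀ n, (D n ∩ E).Finite) :=
  stmt_16_general I hdown hunion hfin V hV hVpos D hD x C hC hCD hCC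
end

section
/- If (λ⁺, λ) is a dominating pair for a λ-monolithic space X, then d(X) ≤ λ. -/
open Cardinal Topology Set

universe u

/-- `N` is a network on the subspace `A`: a family of subsets of `A` such that every
relative open neighborhood of a point of `A` contains a member of `N` containing the point. -/
def IsNetworkOn {X : Type u} [TopologicalSpace X] (A : Set X) (N : Set (Set X)) : Prop :=
  (∀ s ∈ N, s ⊆ A) ∧
  ∀ x ∈ A, ∀ U : Set X, IsOpen U → x ∈ U → ∃ s ∈ N, x ∈ s ∧ s ⊆ U

/-!
If `X` had no dense subset of size `≤ λ`, transfinite recursion along `λ⁺` would give a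
left-separated sequence `(x_α)_{α < λ⁺}`: each `x_α` lies outside the closure of its
predecessors. The dominating pair puts the whole sequence into `cl B` with `|B| ≤ λ`, and
monolithicity gives a network `N` on `cl B` with `|N| ≤ λ`. Choosing for each `α` a member
of `N` containing `x_α` and missing the closure of its predecessors is injective, so
`λ⁺ ≤ |N| ≤ λ`.
-/

section LeftSeparated

variable {X : Type u} [TopologicalSpace X]

def IsLeftSeparated {ι : Type*} [Preorder ι] (F : ι → X) : Prop :=
  ∀ a, F a ∉ closure (F '' Iio a)

theorem exists_isLeftSeparated_of_not_dense {ι : Type u} [Preorder ι] [WellFoundedLT ι]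
    {lam : Cardinal.{u}} (hι : ∀ a : ι, #(Iio a) ≤ lam)
    (hX : ∀ S : Set X, #S ≤ lam → ¬Dense S) : ∃ F : ι → X, IsLeftSeparated F := by
  have hpick : ∀ S : Set X, #S ≤ lam → ∃ x, x ∉ closure S := fun S hS => by
    simpa only [Dense, not_forall] using hX S hS
  choose pick hpick using hpick
  let F : ι → X := wellFounded_lt.fix fun a IH =>
    pick (range fun b : Iio a => IH b.1 b.2) (mk_range_le.trans (hι a))
  refine ⟨F, fun a => ?_⟩
  have hF : F a = pick (range fun b : Iio a => F b.1) (mk_range_le.trans (hι a)) :=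
    wellFounded_lt.fix_eq _ a
  rw [image_eq_range, hF]
  exact hpick _ _

/-- The members of a network picked around the points of a left-separated sequence are
pairwise distinct: the one at `a` misses every earlier point. -/
theorem IsLeftSeparated.mk_le_of_isNetworkOn {ι : Type u} [LinearOrder ι] {F : ι → X}
    (hF : IsLeftSeparated F) {A : Set X} {N : Set (Set X)} (hN : IsNetworkOn A N)
    (hFA : range F ⊆ A) : #ι ≤ #N := by
  have hs : ∀ a, ∃ s ∈ N, F a ∈ s ∧ s ⊆ (closure (F '' Iio a))ᶜ := fun a =>
    hN.2 (F a) (hFA (mem_range_self a)) _ isClosed_closure.isOpen_compl (hF a)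
  choose s hsN hFs hs using hs
  have hlt : ∀ {a b}, a < b → s a ≠ s b := fun {a b} hab heq =>
    hs b (heq ▸ hFs a) (subset_closure ⟨a, hab, rfl⟩)
  refine mk_le_of_injective (f := fun a => (⟨s a, hsN a⟩ : N)) fun a b hab => ?_
  have hab : s a = s b := congrArg Subtype.val hab
  by_contra hne
  rcases lt_or_gt_of_ne hne with h | h
  · exact hlt h hab
  · exact hlt h hab.symm

end LeftSeparated

theorem stmt_17_general {X : Type u} [TopologicalSpace X] (lam : Cardinal.{u})
    (hmono : ∀ Y : Set X, #Y ≤ lam → ∃ N : Set (Set X), #N ≤ lam ∧ IsNetworkOn (closure Y) N)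
    (hdom : DominatingPair X (Order.succ lam) lam) :
    ∃ D : Set X, Dense D ∧ #D ≤ lam := by
  by_contra! hX
  have hι : #(Order.succ lam).ord.ToType = Order.succ lam := by rw [mk_toType, card_ord]
  obtain ⟨F, hF⟩ := exists_isLeftSeparated_of_not_dense (X := X)
    (fun a => Order.lt_succ_iff.mp (hι ▸ mk_Iio_lt a (by rw [hι, Ordinal.type_toType])))
    (fun S hS hd => (hX S hd).not_ge hS)
  obtain ⟨B, hB, hFB⟩ := hdom (range F) (mk_range_le.trans hι.le)
  obtain ⟨N, hN, hnet⟩ := hmono B hB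
  have hsucc : Order.succ lam ≤ lam :=
    hι.symm.le.trans ((hF.mk_le_of_isNetworkOn hnet hFB).trans hN)
  exact (Order.lt_succ lam).not_ge hsucc

theorem stmt_17 {X : Type u} [TopologicalSpace X] (lam : Cardinal.{u}) (hlam : ℵ₀ ≤ lam)
    (hmono : ∀ Y : Set X, #Y ≤ lam → ∃ N : Set (Set X), #N ≤ lam ∧ IsNetworkOn (closure Y) N)
    (hdom : DominatingPair X (Order.succ lam) lam) :
    ∃ D : Set X, Dense D ∧ #D ≤ lam :=
  stmt_17_general lam hmono hdom
end
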